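/- arXiv:1707.07164 — 6 statements merged into one kernel-verified Lean document; each statement's English description precedes it below -/
import Mathlib

section
/- Let θ : [0,∞) → ℝ^N solve the inertial Kuramoto model for N identical oscillators with all-to-all coupling, and suppose Σ_{i=1}^N θ_i(0) = 0 and Σ_{i=1}^N ω_i(0) = 0. Then the kinetic energy vanishes asymptotically: lim_{t→∞} E_K(t) = 0; in particular lim_{t→∞} ω_i(t) = 0 for each i = 1,…,N. -/
/-!
The mechanical energy `m/2 Σᵢ ωᵢ² + κ/(2N) Σᵢⱼ (1 - cos (θⱼ - θᵢ))` is nonnegative and has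
derivative `-γ Σᵢ ωᵢ²` along solutions: the coupling terms cancel because `sin` is odd. Hence
the velocities stay bounded, so do the accelerations by the equation of motion, and `Σᵢ ωᵢ²` is
Lipschitz on `[0, ∞)` with integral at most `E(0)/γ`. Barbalat's lemma (an integrable function
that is uniformly continuous tends to `0`) then gives `Σᵢ ωᵢ² → 0`.
-/

open Filter Set Real MeasureTheory Topology

theorem Finset.sum_sum_mul_sub_of_antisymm {ι R : Type*} [Fintype ι] [CommRing R]
    (f : ι → ι → R) (hf : ∀ i j, f j i = -f i j) (b : ι → R) :
    ∑ i, ∑ j, f i j * (b j - b i) = -2 * ∑ i, b i * ∑ j, f i j := by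
  have hswap : ∑ i, ∑ j, f i j * b j = -∑ i, ∑ j, f i j * b i := by
    rw [Finset.sum_comm, ← Finset.sum_neg_distrib]
    refine Finset.sum_congr rfl fun i _ => ?_
    rw [← Finset.sum_neg_distrib]
    exact Finset.sum_congr rfl fun j _ => by rw [hf, neg_mul]
  calc ∑ i, ∑ j, f i j * (b j - b i)
        = ∑ i, ∑ j, f i j * b j - ∑ i, ∑ j, f i j * b i := by
          simp only [mul_sub, Finset.sum_sub_distrib]
    _ = -2 * ∑ i, ∑ j, f i j * b i := by rw [hswap]; ring
    _ = -2 * ∑ i, b i * ∑ j, f i j := by simp_rw [mul_comm (b _), Finset.sum_mul]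

theorem LipschitzOnWith.abs_intervalIntegral_sub_mul_le {g : ℝ → ℝ} {K : NNReal} {t δ : ℝ}
    (hδ : 0 ≤ δ) (hlip : LipschitzOnWith K g (Icc t (t + δ))) :
    |(∫ s in t..t + δ, g s) - δ * g t| ≤ K * δ * δ := by
  have hint : IntervalIntegrable g volume t (t + δ) :=
    hlip.continuousOn.intervalIntegrable_of_Icc (by linarith)
  have hdiff : (∫ s in t..t + δ, g s - g t) = (∫ s in t..t + δ, g s) - δ * g t := by
    rw [intervalIntegral.integral_sub hint intervalIntegrable_const,
      intervalIntegral.integral_const, smul_eq_mul, add_sub_cancel_left]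
  have hbound := intervalIntegral.norm_integral_le_of_norm_le_const (a := t) (b := t + δ)
    (C := K * δ) (f := fun s => g s - g t) fun s hs => by
      rw [uIoc_of_le (by linarith)] at hs
      have h := hlip.dist_le_mul s (Ioc_subset_Icc_self hs) t (left_mem_Icc.2 (by linarith))
      rw [Real.dist_eq, Real.dist_eq, abs_of_nonneg (sub_nonneg.2 hs.1.le)] at h
      rw [Real.norm_eq_abs]
      nlinarith [hs.2, K.coe_nonneg]
  rwa [hdiff, Real.norm_eq_abs, add_sub_cancel_left, abs_of_nonneg hδ] at hbound

theorem MeasureTheory.IntegrableOn.tendsto_intervalIntegral_add_atTop {g : ℝ → ℝ} {a : ℝ}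
    (hint : IntegrableOn g (Ioi a)) (δ : ℝ) :
    Tendsto (fun t => ∫ s in t..t + δ, g s) atTop (𝓝 0) := by
  have hii : ∀ b, a ≤ b → IntervalIntegrable g volume a b := fun b hb =>
    (intervalIntegrable_iff_integrableOn_Ioc_of_le hb).2 (hint.mono_set Ioc_subset_Ioi_self)
  have hF : Tendsto (fun T => ∫ s in a..T, g s) atTop (𝓝 (∫ s in Ioi a, g s)) :=
    intervalIntegral_tendsto_integral_Ioi a hint tendsto_id
  have hshift : Tendsto (fun t => ∫ s in a..t + δ, g s) atTop (𝓝 (∫ s in Ioi a, g s)) :=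
    hF.comp (tendsto_atTop_add_const_right _ δ tendsto_id)
  have hsub := hshift.sub hF
  rw [sub_self] at hsub
  refine hsub.congr' ?_
  filter_upwards [eventually_ge_atTop a, eventually_ge_atTop (a - δ)] with t ht htδ
  exact intervalIntegral.integral_interval_sub_left (hii _ (by linarith)) (hii t ht)

theorem tendsto_zero_of_integrableOn_Ioi_of_lipschitzOnWith {g : ℝ → ℝ} {a : ℝ} {K : NNReal}
    (hint : IntegrableOn g (Ioi a)) (hlip : LipschitzOnWith K g (Ici a)) :
    Tendsto g atTop (𝓝 0) := by
  refine Metric.tendsto_nhds.2 fun ε hε => ?_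
  obtain ⟨δ, hδ, hKδ⟩ := exists_pos_mul_lt (half_pos hε) (K : ℝ)
  filter_upwards [eventually_ge_atTop a, Metric.tendsto_nhds.1
    (hint.tendsto_intervalIntegral_add_atTop δ) (δ * (ε / 2)) (by positivity)] with t ht hsmall
  rw [Real.dist_eq, sub_zero] at hsmall ⊢
  have hwindow := LipschitzOnWith.abs_intervalIntegral_sub_mul_le hδ.le
    (hlip.mono ((Icc_subset_Ici_iff (by linarith)).2 ht))
  -- `δ |g t| ≤ |∫ₜ^{t+δ} g| + K δ²`, and integrals over windows of fixed length tend to `0`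
  have : δ * |g t| < δ * ε := by
    rw [← abs_of_pos hδ, ← abs_mul, abs_of_pos hδ]
    linarith [abs_sub_abs_le_abs_sub (δ * g t) (∫ s in t..t + δ, g s),
      abs_sub_comm (δ * g t) (∫ s in t..t + δ, g s), mul_lt_mul_of_pos_right hKδ hδ]
  exact lt_of_mul_lt_mul_left this hδ.le

namespace Kuramoto

variable {N : ℕ}

noncomputable section

def coupling (κ : ℝ) (θ : Fin N → ℝ) (i : Fin N) : ℝ :=
  κ / N * ∑ j, sin (θ j - θ i)

def potential (κ : ℝ) (θ : Fin N → ℝ) : ℝ :=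
  κ / (2 * N) * ∑ i, ∑ j, (1 - cos (θ j - θ i))

def energy (m κ : ℝ) (θ ω : Fin N → ℝ) : ℝ :=
  m / 2 * ∑ i, ω i ^ 2 + potential κ θ

end

structure IsSolution (m γ κ : ℝ) (θ ω α : ℝ → Fin N → ℝ) : Prop where
  hasDerivAt_phase : ∀ t i, HasDerivAt (fun s => θ s i) (ω t i) t
  hasDerivAt_velocity : ∀ t i, HasDerivAt (fun s => ω s i) (α t i) t
  equation : ∀ t ≥ 0, ∀ i, m * α t i = -γ * ω t i + coupling κ (θ t) i

theorem abs_coupling_le {κ : ℝ} (hκ : 0 ≤ κ) (θ : Fin N → ℝ) (i : Fin N) :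
    |coupling κ θ i| ≤ κ := by
  have hsum : |∑ j, sin (θ j - θ i)| ≤ N := by
    simpa using (Finset.abs_sum_le_sum_abs _ _).trans
      (Finset.sum_le_card_nsmul Finset.univ _ 1 fun j _ => abs_sin_le_one (θ j - θ i))
  rw [coupling, abs_mul, abs_of_nonneg (by positivity)]
  calc κ / N * |∑ j, sin (θ j - θ i)| ≤ κ / N * N := by gcongr
    _ ≤ κ := by
      rcases Nat.eq_zero_or_pos N with rfl | hN
      · simpa using hκ
      · rw [div_mul_cancel₀ _ (by positivity)]

theorem potential_nonneg {κ : ℝ} (hκ : 0 ≤ κ) (θ : Fin N → ℝ) : 0 ≤ potential κ θ :=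
  mul_nonneg (by positivity) <| Finset.sum_nonneg fun i _ => Finset.sum_nonneg fun j _ =>
    sub_nonneg.2 (cos_le_one _)

theorem hasDerivAt_potential (κ : ℝ) {θ : ℝ → Fin N → ℝ} {ω : Fin N → ℝ} {t : ℝ}
    (hθ : ∀ i, HasDerivAt (fun s => θ s i) (ω i) t) :
    HasDerivAt (fun s => potential κ (θ s)) (-∑ i, ω i * coupling κ (θ t) i) t := by
  have hpairs := HasDerivAt.fun_sum (u := Finset.univ) fun i _ =>
    HasDerivAt.fun_sum (u := Finset.univ) fun j _ =>
      (((hθ j).sub (hθ i)).cos).const_sub 1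
  refine (hpairs.const_mul (κ / (2 * N))).congr_deriv ?_
  have hsum := Finset.sum_sum_mul_sub_of_antisymm (fun i j => sin (θ t j - θ t i))
    (fun i j => by rw [← sin_neg, neg_sub]) ω
  simp only [Pi.sub_apply, neg_mul, neg_neg, mul_comm (sin _)] at hsum ⊢
  have hfactor :
      ∑ i, ω i * coupling κ (θ t) i = κ / N * ∑ i, ω i * ∑ j, sin (θ t j - θ t i) := by
    rw [Finset.mul_sum]
    exact Finset.sum_congr rfl fun i _ => by rw [coupling]; ring
  rw [hsum, hfactor]
  ring

theorem hasDerivAt_energy {m γ κ t : ℝ} {θ ω : ℝ → Fin N → ℝ} {α : Fin N → ℝ}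
    (hθ : ∀ i, HasDerivAt (fun s => θ s i) (ω t i) t)
    (hω : ∀ i, HasDerivAt (fun s => ω s i) (α i) t)
    (hode : ∀ i, m * α i = -γ * ω t i + coupling κ (θ t) i) :
    HasDerivAt (fun s => energy m κ (θ s) (ω s)) (-γ * ∑ i, ω t i ^ 2) t := by
  have hkin := (HasDerivAt.fun_sum (u := Finset.univ) fun i _ => (hω i).pow 2).const_mul (m / 2)
  refine (hkin.add (hasDerivAt_potential κ hθ)).congr_deriv ?_
  simp only [Finset.mul_sum, ← Finset.sum_neg_distrib, ← Finset.sum_add_distrib]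
  exact Finset.sum_congr rfl fun i _ => by linear_combination ω t i * hode i

variable {m γ κ : ℝ} {θ ω α : ℝ → Fin N → ℝ}

theorem continuous_sum_sq (hω : ∀ t i, HasDerivAt (fun s => ω s i) (α t i) t) :
    Continuous fun t => ∑ i, ω t i ^ 2 :=
  continuous_finsetSum _ fun i _ =>
    (continuous_iff_continuousAt.2 fun t => (hω t i).continuousAt).pow 2

namespace IsSolution

theorem energy_add_integral_eq (h : IsSolution m γ κ θ ω α) {T : ℝ} (hT : 0 ≤ T) :
    energy m κ (θ T) (ω T) + γ * ∫ t in 0..T, ∑ i, ω t i ^ 2 =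
      energy m κ (θ 0) (ω 0) := by
  have hftc := intervalIntegral.integral_eq_sub_of_hasDerivAt
    (fun t ht => hasDerivAt_energy (h.hasDerivAt_phase t) (h.hasDerivAt_velocity t)
      (h.equation t (uIcc_of_le hT ▸ ht).1))
    (((continuous_sum_sq h.hasDerivAt_velocity).const_mul (-γ)).intervalIntegrable 0 T)
  rw [intervalIntegral.integral_const_mul] at hftc
  linarith

theorem sum_sq_le_energy (h : IsSolution m γ κ θ ω α) (hm : 0 < m) (hγ : 0 ≤ γ)
    (hκ : 0 ≤ κ) {t : ℝ} (ht : 0 ≤ t) :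
    ∑ i, ω t i ^ 2 ≤ 2 * energy m κ (θ 0) (ω 0) / m := by
  have hdiss : 0 ≤ γ * ∫ s in 0..t, ∑ i, ω s i ^ 2 :=
    mul_nonneg hγ <| intervalIntegral.integral_nonneg ht fun s _ => by positivity
  have := h.energy_add_integral_eq ht
  rw [energy] at this
  rw [le_div_iff₀ hm]
  linarith [potential_nonneg hκ (θ t)]

theorem integral_sum_sq_le_energy (h : IsSolution m γ κ θ ω α) (hm : 0 ≤ m) (hγ : 0 < γ)
    (hκ : 0 ≤ κ) {T : ℝ} (hT : 0 ≤ T) :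
    ∫ t in 0..T, ∑ i, ω t i ^ 2 ≤ energy m κ (θ 0) (ω 0) / γ := by
  have hkin : 0 ≤ m / 2 * ∑ i, ω T i ^ 2 := by positivity
  have := h.energy_add_integral_eq hT
  rw [energy] at this
  rw [le_div_iff₀ hγ]
  linarith [potential_nonneg hκ (θ T)]

theorem integrableOn_sum_sq (h : IsSolution m γ κ θ ω α) (hm : 0 ≤ m) (hγ : 0 < γ)
    (hκ : 0 ≤ κ) : IntegrableOn (fun t => ∑ i, ω t i ^ 2) (Ioi 0) := by
  have hnorm : (fun t => ‖∑ i, ω t i ^ 2‖) = fun t => ∑ i, ω t i ^ 2 :=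
    funext fun t => Real.norm_of_nonneg (by positivity)
  refine integrableOn_Ioi_of_intervalIntegral_norm_bounded (energy m κ (θ 0) (ω 0) / γ) 0
    (fun T => (continuous_sum_sq h.hasDerivAt_velocity).integrableOn_Icc.mono_set
      Ioc_subset_Icc_self) tendsto_id ?_
  filter_upwards [eventually_ge_atTop 0] with T hT
  rw [hnorm]
  exact h.integral_sum_sq_le_energy hm hγ hκ hT

theorem abs_velocity_le (h : IsSolution m γ κ θ ω α) (hm : 0 < m) (hγ : 0 ≤ γ)
    (hκ : 0 ≤ κ) {t : ℝ} (ht : 0 ≤ t) (i : Fin N) : |ω t i| ≤ √(2 * energy m κ (θ 0) (ω 0) / m) :=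
  abs_le_sqrt <| (Finset.single_le_sum (fun j _ => sq_nonneg (ω t j)) (Finset.mem_univ i)).trans
    (h.sum_sq_le_energy hm hγ hκ ht)

theorem abs_acceleration_le (h : IsSolution m γ κ θ ω α) (hm : 0 < m) (hγ : 0 ≤ γ)
    (hκ : 0 ≤ κ) {t : ℝ} (ht : 0 ≤ t) (i : Fin N) :
    |α t i| ≤ (γ * √(2 * energy m κ (θ 0) (ω 0) / m) + κ) / m := by
  rw [le_div_iff₀ hm]
  calc |α t i| * m = |-γ * ω t i + coupling κ (θ t) i| := by
        rw [← h.equation t ht i, abs_mul, abs_of_pos hm, mul_comm]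
    _ ≤ γ * |ω t i| + κ := by
        refine (abs_add_le _ _).trans (add_le_add (le_of_eq ?_) (abs_coupling_le hκ _ _))
        rw [abs_mul, abs_neg, abs_of_nonneg hγ]
    _ ≤ γ * √(2 * energy m κ (θ 0) (ω 0) / m) + κ := by
        gcongr
        exact h.abs_velocity_le hm hγ hκ ht i

theorem lipschitzOnWith_sum_sq (h : IsSolution m γ κ θ ω α) (hm : 0 < m) (hγ : 0 ≤ γ)
    (hκ : 0 ≤ κ) : ∃ K, LipschitzOnWith K (fun t => ∑ i, ω t i ^ 2) (Ici 0) := by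
  set B := √(2 * energy m κ (θ 0) (ω 0) / m)
  set A := (γ * B + κ) / m
  have hB : 0 ≤ B := sqrt_nonneg _
  have hderiv : ∀ t, HasDerivAt (fun t => ∑ i, ω t i ^ 2) (∑ i, 2 * ω t i * α t i) t := fun t =>
    (HasDerivAt.fun_sum fun i _ => (h.hasDerivAt_velocity t i).pow 2).congr_deriv (by simp)
  refine ⟨(N * (2 * B * A)).toNNReal, (convex_Ici 0).lipschitzOnWith_of_nnnorm_hasDerivWithin_le
    (fun t _ => (hderiv t).hasDerivWithinAt) fun t ht => ?_⟩
  have hterm : ∀ i, |2 * ω t i * α t i| ≤ 2 * B * A := fun i => by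
    rw [abs_mul, abs_mul, abs_two, mul_assoc, mul_assoc]
    gcongr
    · exact h.abs_velocity_le hm hγ hκ ht i
    · exact h.abs_acceleration_le hm hγ hκ ht i
  rw [le_toNNReal_iff_coe_le (by positivity), coe_nnnorm, Real.norm_eq_abs]
  simpa using (Finset.abs_sum_le_sum_abs _ _).trans
    (Finset.sum_le_card_nsmul Finset.univ _ _ fun i _ => hterm i)

theorem tendsto_sum_sq_atTop (h : IsSolution m γ κ θ ω α) (hm : 0 < m) (hγ : 0 < γ)
    (hκ : 0 ≤ κ) : Tendsto (fun t => ∑ i, ω t i ^ 2) atTop (𝓝 0) :=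
  have ⟨_, hlip⟩ := h.lipschitzOnWith_sum_sq hm hγ.le hκ
  tendsto_zero_of_integrableOn_Ioi_of_lipschitzOnWith
    (h.integrableOn_sum_sq hm.le hγ hκ) hlip

end IsSolution

end Kuramoto

theorem kuramoto_inertia_kinetic_energy_decay_general
    (N : ℕ)
    (m γ κ : ℝ) (hm : 0 < m) (hγ : 0 < γ) (hκ : 0 < κ)
    (θ : ℝ → Fin N → ℝ)
    (hreg : ∀ i, ContDiff ℝ 2 (fun t => θ t i))
    (hode : ∀ t ≥ (0:ℝ), ∀ i,
      m * deriv (deriv (fun s => θ s i)) t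
        = -γ * deriv (fun s => θ s i) t
          + (κ / N) * ∑ j, Real.sin (θ t j - θ t i))
    (EK : ℝ → ℝ)
    (hEK : EK = fun t => (m / 2) * ∑ i, (deriv (fun s => θ s i) t) ^ 2) :
    Tendsto EK atTop (nhds 0) ∧
    ∀ i, Tendsto (fun t => deriv (fun s => θ s i) t) atTop (nhds 0) := by
  have hsol : Kuramoto.IsSolution m γ κ θ (fun t i => deriv (fun s => θ s i) t)
      (fun t i => deriv (deriv (fun s => θ s i)) t) :=
    ⟨fun t i => ((hreg i).differentiable two_ne_zero t).hasDerivAt,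
      fun t i => ((hreg i).differentiable_deriv_two t).hasDerivAt, hode⟩
  have hsum := hsol.tendsto_sum_sq_atTop hm hγ hκ.le
  refine ⟨hEK ▸ by simpa using hsum.const_mul (m / 2), fun i => ?_⟩
  have hsq : Tendsto (fun t => deriv (fun s => θ s i) t ^ 2) atTop (𝓝 0) :=
    squeeze_zero (fun t => sq_nonneg _) (fun t => Finset.single_le_sum
      (f := fun j => deriv (fun s => θ s j) t ^ 2) (fun j _ => sq_nonneg _) (Finset.mem_univ i))
      hsum
  exact (tendsto_zero_iff_abs_tendsto_zero _).2
    (by simpa [Function.comp_def, sqrt_sq_eq_abs] using hsq.sqrt)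

/-- Asymptotic vanishing of the kinetic energy for the inertial
Kuramoto model of identical oscillators with all-to-all coupling, under zero
initial phase and frequency averages: `E_K(t) → 0` and each `ω_i(t) → 0` as
`t → ∞`. -/
theorem kuramoto_inertia_kinetic_energy_decay
    (N : ℕ) (hN : 1 ≤ N)
    (m γ κ : ℝ) (hm : 0 < m) (hγ : 0 < γ) (hκ : 0 < κ)
    (θ : ℝ → Fin N → ℝ)
    (hreg : ∀ i, ContDiff ℝ 2 (fun t => θ t i))
    (hode : ∀ t ≥ (0:ℝ), ∀ i,
      m * deriv (deriv (fun s => θ s i)) t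
        = -γ * deriv (fun s => θ s i) t
          + (κ / N) * ∑ j, Real.sin (θ t j - θ t i))
    (hθ0 : ∑ i, θ 0 i = 0)
    (hω0 : ∑ i, deriv (fun s => θ s i) 0 = 0)
    (EK : ℝ → ℝ)
    (hEK : EK = fun t => (m / 2) * ∑ i, (deriv (fun s => θ s i) t) ^ 2) :
    Tendsto EK atTop (nhds 0) ∧
    ∀ i, Tendsto (fun t => deriv (fun s => θ s i) t) atTop (nhds 0) :=
  kuramoto_inertia_kinetic_energy_decay_general N m γ κ hm hγ hκ θ hreg hode EK hEK
end

section
/- Let α > 0, let y : [0,∞) → ℝ be a nonnegative continuously differentiable function, and let β : [0,∞) → ℝ be a bounded continuous function such that y'(t) + α·y(t) = β(t) for all t > 0. Then for all t ≥ 0, y(t) ≤ y(0)·e^{−αt} + (1/α)·sup_{s ∈ [t/2, t]} |β(s)| + (sup_{s ≥ 0} |β(s)| / α)·e^{−αt/2}. In particular, if β(t) → 0 as t → ∞, then y(t) → 0 as t → ∞. -/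
open Filter Set Real intervalIntegral MeasureTheory Topology

/-! Variation of constants gives
`y t = y 0 e^{-αt} + e^{-αt} ∫₀ᵗ β(s) e^{αs} ds`. Splitting the integral at `t/2`, the part over
`[t/2, t]` is at most `(1/α) sup_{[t/2,t]} |β|`, while the part over `[0, t/2]` carries the
extra factor `e^{-αt/2}`. The same estimate bounds `|y t - y 0 e^{-αt}|`, and each of its
terms tends to `0` when `β` does. -/

lemma integral_exp_mul {α : ℝ} (hα : α ≠ 0) (a b : ℝ) :
    ∫ s in a..b, exp (α * s) = (exp (α * b) - exp (α * a)) / α := by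
  rw [integral_comp_mul_left (fun x => exp x) hα, integral_exp, smul_eq_mul, inv_mul_eq_div]

lemma abs_integral_mul_exp_le {α a b C : ℝ} {β : ℝ → ℝ} (hα : 0 < α) (hab : a ≤ b)
    (hC : ∀ s ∈ Icc a b, |β s| ≤ C) :
    |∫ s in a..b, β s * exp (α * s)| ≤ C * exp (α * b) / α := by
  calc |∫ s in a..b, β s * exp (α * s)| ≤ ∫ s in a..b, C * exp (α * s) := by
        rw [← norm_eq_abs]
        refine norm_integral_le_of_norm_le hab (Eventually.of_forall fun s hs => ?_)
          ((by fun_prop : Continuous fun s => C * exp (α * s)).intervalIntegrable _ _)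
        rw [norm_mul, norm_eq_abs, norm_of_nonneg (exp_pos _).le]
        gcongr
        exact hC s (Ioc_subset_Icc_self hs)
    _ = C * (exp (α * b) - exp (α * a)) / α := by
        rw [intervalIntegral.integral_const_mul, integral_exp_mul hα.ne', mul_div_assoc]
    _ ≤ C * exp (α * b) / α := by
        have hC0 : 0 ≤ C := (abs_nonneg _).trans (hC a ⟨le_rfl, hab⟩)
        gcongr
        exact sub_le_self _ (exp_pos _).le

lemma mul_exp_sub_mul_exp_eq_integral {α a b : ℝ} {y y' β : ℝ → ℝ} (hab : a ≤ b)
    (hyc : ContinuousOn y (Icc a b)) (hy : ∀ s ∈ Ioo a b, HasDerivAt y (y' s) s)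
    (hode : ∀ s ∈ Ioo a b, y' s + α * y s = β s) (hβ : IntervalIntegrable β volume a b) :
    y b * exp (α * b) - y a * exp (α * a) = ∫ s in a..b, β s * exp (α * s) := by
  have hexp : Continuous fun s => exp (α * s) := by fun_prop
  refine (integral_eq_sub_of_hasDerivAt_of_le hab (hyc.mul hexp.continuousOn) (fun s hs => ?_)
    (hβ.mul_continuousOn hexp.continuousOn)).symm
  refine ((hy s hs).mul (hasDerivAt_const_mul α).exp).congr_deriv ?_
  rw [← hode s hs]
  ring

lemma abs_sub_mul_exp_neg_le {α : ℝ} {y β : ℝ → ℝ} (hα : 0 < α) (hy : Differentiable ℝ y)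
    (hβc : Continuous β) (hβb : BddAbove ((fun s => |β s|) '' Ici 0))
    (hode : ∀ t > 0, deriv y t + α * y t = β t)
    {t : ℝ} (ht : 0 ≤ t) :
    |y t - y 0 * exp (-α * t)| ≤ (1 / α) * sSup ((fun s => |β s|) '' Icc (t / 2) t)
      + (sSup ((fun s => |β s|) '' Ici 0) / α) * exp (-α * t / 2) := by
  set M₁ := sSup ((fun s => |β s|) '' Icc (t / 2) t)
  set M₂ := sSup ((fun s => |β s|) '' Ici 0)
  have hM₁ : ∀ s ∈ Icc (t / 2) t, |β s| ≤ M₁ := fun s hs =>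
    le_csSup (isCompact_Icc.image hβc.abs).bddAbove (mem_image_of_mem _ hs)
  have hM₂ : ∀ s ∈ Icc 0 (t / 2), |β s| ≤ M₂ := fun s hs =>
    le_csSup hβb (mem_image_of_mem _ (mem_Ici.2 hs.1))
  have hduhamel : y t * exp (α * t) - y 0 = (∫ s in 0..t / 2, β s * exp (α * s))
      + ∫ s in t / 2..t, β s * exp (α * s) := by
    have hint : Continuous fun s => β s * exp (α * s) := by fun_prop
    rw [integral_add_adjacent_intervals (hint.intervalIntegrable _ _)
      (hint.intervalIntegrable _ _)]
    simpa using mul_exp_sub_mul_exp_eq_integral ht hy.continuous.continuousOn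
      (fun s _ => (hy s).hasDerivAt) (fun s hs => hode s hs.1)
      (hβc.intervalIntegrable _ _)
  have e₁ : exp (-α * t) * exp (α * t) = 1 := by rw [← exp_add]; simp
  have e₂ : exp (-α * t) * exp (α * (t / 2)) = exp (-α * t / 2) := by rw [← exp_add]; ring_nf
  calc |y t - y 0 * exp (-α * t)|
      = exp (-α * t) * |(∫ s in 0..t / 2, β s * exp (α * s))
          + ∫ s in t / 2..t, β s * exp (α * s)| := by
        rw [show y t - y 0 * exp (-α * t) = exp (-α * t) * (y t * exp (α * t) - y 0) by
          linear_combination (-y t) * e₁, ← hduhamel, abs_mul, abs_of_pos (exp_pos _)]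
    _ ≤ exp (-α * t) * (M₂ * exp (α * (t / 2)) / α + M₁ * exp (α * t) / α) := by
        gcongr
        exact (abs_add_le _ _).trans (add_le_add
          (abs_integral_mul_exp_le hα (by linarith) hM₂)
          (abs_integral_mul_exp_le hα (by linarith) hM₁))
    _ = (1 / α) * M₁ + (M₂ / α) * exp (-α * t / 2) := by
        linear_combination (M₂ / α) * e₂ + (M₁ / α) * e₁

lemma tendsto_sSup_abs_image_Icc_half {β : ℝ → ℝ} (hβ : Tendsto β atTop (𝓝 0)) :
    Tendsto (fun t => sSup ((fun s => |β s|) '' Icc (t / 2) t)) atTop (𝓝 0) := by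
  refine tendsto_order.2 ⟨fun a ha => Eventually.of_forall fun t =>
    ha.trans_le (Real.sSup_nonneg (by rintro _ ⟨s, -, rfl⟩; exact abs_nonneg _)), fun ε hε => ?_⟩
  obtain ⟨T, hT⟩ := eventually_atTop.1
    (NormedAddGroup.tendsto_nhds_zero.1 hβ (ε / 2) (half_pos hε))
  filter_upwards [eventually_ge_atTop (2 * T)] with t ht
  refine (Real.sSup_le ?_ (half_pos hε).le).trans_lt (half_lt_self hε)
  rintro _ ⟨s, hs, rfl⟩
  exact (hT s (by linarith [hs.1])).le

theorem gronwall_type_decay_lemma_general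
    (α : ℝ) (hα : 0 < α)
    (y β : ℝ → ℝ)
    (hy : ContDiff ℝ 1 y)
    (hβc : Continuous β)
    (hβb : BddAbove ((fun s => |β s|) '' Set.Ici (0:ℝ)))
    (hode : ∀ t > (0:ℝ), deriv y t + α * y t = β t) :
    (∀ t ≥ (0:ℝ),
      y t ≤ y 0 * Real.exp (-α * t)
        + (1 / α) * sSup ((fun s => |β s|) '' Set.Icc (t / 2) t)
        + (sSup ((fun s => |β s|) '' Set.Ici (0:ℝ)) / α)
          * Real.exp (-α * t / 2)) ∧
    (Tendsto β atTop (nhds 0) → Tendsto y atTop (nhds 0)) := by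
  have hest := fun t (ht : 0 ≤ t) =>
    abs_sub_mul_exp_neg_le hα (hy.differentiable one_ne_zero) hβc hβb hode ht
  refine ⟨fun t ht => by linarith [le_abs_self (y t - y 0 * exp (-α * t)), hest t ht],
    fun hβ₀ => ?_⟩
  have hlin : Tendsto (fun t => -α * t) atTop atBot :=
    tendsto_id.const_mul_atTop_of_neg (neg_neg_of_pos hα)
  have hbound : Tendsto (fun t => |y 0 * exp (-α * t)| + ((1 / α) *
      sSup ((fun s => |β s|) '' Icc (t / 2) t)
      + (sSup ((fun s => |β s|) '' Ici 0) / α) * exp (-α * t / 2))) atTop (𝓝 0) := by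
    simpa using ((tendsto_exp_atBot.comp hlin).const_mul (y 0)).abs.add
      (((tendsto_sSup_abs_image_Icc_half hβ₀).const_mul (1 / α)).add
        ((tendsto_exp_atBot.comp (hlin.atBot_div_const two_pos)).const_mul _))
  refine squeeze_zero_norm' ((eventually_ge_atTop 0).mono fun t ht => ?_) hbound
  linarith [abs_sub_abs_le_abs_sub (y t) (y 0 * exp (-α * t)), hest t ht, norm_eq_abs (y t)]

/-- A generalized Grönwall-type lemma. If `y ≥ 0` is `C¹`,
`β` is bounded and continuous, and `y' + α·y = β` for `t > 0` with `α > 0`,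
then `y(t) ≤ y(0)·e^{−αt} + (1/α)·sup_{[t/2,t]}|β| + (sup_{s≥0}|β|/α)·e^{−αt/2}`,
and if `β(t) → 0` then `y(t) → 0` as `t → ∞`. -/
theorem gronwall_type_decay_lemma
    (α : ℝ) (hα : 0 < α)
    (y β : ℝ → ℝ)
    (hy : ContDiff ℝ 1 y)
    (hynn : ∀ t ≥ (0:ℝ), 0 ≤ y t)
    (hβc : Continuous β)
    (hβb : BddAbove ((fun s => |β s|) '' Set.Ici (0:ℝ)))
    (hode : ∀ t > (0:ℝ), deriv y t + α * y t = β t) :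
    (∀ t ≥ (0:ℝ),
      y t ≤ y 0 * Real.exp (-α * t)
        + (1 / α) * sSup ((fun s => |β s|) '' Set.Icc (t / 2) t)
        + (sSup ((fun s => |β s|) '' Set.Ici (0:ℝ)) / α)
          * Real.exp (-α * t / 2)) ∧
    (Tendsto β atTop (nhds 0) → Tendsto y atTop (nhds 0)) :=
  gronwall_type_decay_lemma_general α hα y β hy hβc hβb hode
end

section
/- Let θ : [0,∞) → ℝ^N solve the inertial Kuramoto model for N identical oscillators with all-to-all coupling, and suppose Σ_{i=1}^N θ_i(0) = 0 and Σ_{i=1}^N ω_i(0) = 0. Then the angular accelerations vanish asymptotically: lim_{t→∞} θ_i''(t) = 0 for each i = 1,…,N. -/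
/-!
The energy `E = m/2 Σ ωᵢ² - κ/(2N) Σᵢⱼ cos (θⱼ - θᵢ)` satisfies `E' = -γ Σ ωᵢ²`, because the
coupling force is minus the gradient of the potential. So `E` is nonincreasing; the potential being
bounded, `E` converges and keeps the velocities bounded, and through the equation of motion so are
the accelerations and their derivatives. Barbalat's lemma (if `v` converges and `v'` is uniformly
continuous, then `v' → 0`) applied to `E` gives `Σ ωᵢ² → 0`, and applied to `ωᵢ` gives `θᵢ'' → 0`.
-/

open Filter Set Topology Asymptotics Real

noncomputable section

theorem tendsto_zero_of_tendsto_of_hasDerivAt_of_uniformContinuousOn {v f : ℝ → ℝ} {a l : ℝ}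
    (hv : Tendsto v atTop (𝓝 l)) (hvf : ∀ t ≥ a, HasDerivAt v (f t) t)
    (hf : UniformContinuousOn f (Ici a)) : Tendsto f atTop (𝓝 0) := by
  rw [Metric.tendsto_atTop]
  intro ε hε
  obtain ⟨δ, hδ, hfδ⟩ := Metric.uniformContinuousOn_iff.1 hf (ε / 2) (half_pos hε)
  obtain ⟨T, hT⟩ := Metric.tendsto_atTop.1 hv (ε * δ / 4) (by positivity)
  refine ⟨max T a, fun t ht => ?_⟩
  have hTt : T ≤ t := le_of_max_le_left ht
  have hat : a ≤ t := le_of_max_le_right ht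
  obtain ⟨c, hc, hfc⟩ := exists_hasDerivAt_eq_slope v f (lt_add_of_pos_right t hδ)
    (fun x hx => (hvf x (hat.trans hx.1)).continuousAt.continuousWithinAt)
    (fun x hx => hvf x (hat.trans hx.1.le))
  have hslope : |f c| < ε / 2 := by
    have h₁ := hT (t + δ) (by linarith)
    have h₂ := hT t hTt
    rw [Real.dist_eq] at h₁ h₂
    rw [hfc, add_sub_cancel_left, abs_div, abs_of_pos hδ, div_lt_iff₀ hδ]
    linarith [abs_sub_le (v (t + δ)) l (v t), abs_sub_comm (v t) l]
  have hnear : dist (f t) (f c) < ε / 2 := by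
    refine hfδ t hat c (hat.trans hc.1.le) ?_
    rw [Real.dist_eq, abs_sub_lt_iff]
    constructor <;> linarith [hc.1, hc.2]
  rw [Real.dist_eq, sub_zero] at *
  linarith [abs_sub_abs_le_abs_sub (f t) (f c)]

theorem tendsto_zero_of_tendsto_of_hasDerivAt_of_isBigO_one {v f f' : ℝ → ℝ} {l : ℝ}
    (hv : Tendsto v atTop (𝓝 l)) (hvf : ∀ᶠ t in atTop, HasDerivAt v (f t) t)
    (hff' : ∀ᶠ t in atTop, HasDerivAt f (f' t) t) (hf' : f' =O[atTop] fun _ => (1 : ℝ)) :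
    Tendsto f atTop (𝓝 0) := by
  obtain ⟨C, hC⟩ := hf'.bound
  obtain ⟨a, ha⟩ := eventually_atTop.1 (hvf.and (hff'.and hC))
  refine tendsto_zero_of_tendsto_of_hasDerivAt_of_uniformContinuousOn hv (fun t ht => (ha t ht).1)
    (LipschitzOnWith.uniformContinuousOn (K := Real.toNNReal C) ?_)
  refine (convex_Ici a).lipschitzOnWith_of_nnnorm_hasDerivWithin_le
    (fun t ht => (ha t ht).2.1.hasDerivWithinAt) fun t ht => ?_
  rw [← NNReal.coe_le_coe, coe_nnnorm]
  have hbound := (ha t ht).2.2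
  rw [norm_one, mul_one] at hbound
  exact hbound.trans (Real.le_coe_toNNReal C)

theorem exists_tendsto_of_antitoneOn_Ici {f : ℝ → ℝ} {a c : ℝ} (hf : AntitoneOn f (Ici a))
    (hc : ∀ t ≥ a, c ≤ f t) : ∃ l, Tendsto f atTop (𝓝 l) := by
  have hanti : Antitone fun t => f (max a t) := fun s t hst =>
    hf (le_max_left a s) (le_max_left a t) (max_le_max le_rfl hst)
  refine ⟨_, (tendsto_atTop_ciInf hanti ⟨c, ?_⟩).congr' ?_⟩
  · rintro _ ⟨t, rfl⟩
    exact hc _ (le_max_left a t)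
  · filter_upwards [eventually_ge_atTop a] with t ht
    rw [max_eq_right ht]

namespace InertialKuramoto

variable {N : ℕ}

def couplingForce (κ : ℝ) (x : Fin N → ℝ) (i : Fin N) : ℝ :=
  κ / N * ∑ j, sin (x j - x i)

def potential (κ : ℝ) (x : Fin N → ℝ) : ℝ :=
  -(κ / (2 * N)) * ∑ i, ∑ j, cos (x j - x i)

def energy (m κ : ℝ) (x v : Fin N → ℝ) : ℝ :=
  m / 2 * ∑ i, v i ^ 2 + potential κ x

theorem abs_couplingForce_le (κ : ℝ) (x : Fin N → ℝ) (i : Fin N) :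
    |couplingForce κ x i| ≤ |κ| := by
  have hN : (0 : ℝ) < N := Nat.cast_pos.2 i.pos
  have hsum : |∑ j, sin (x j - x i)| ≤ N := by
    refine (Finset.abs_sum_le_sum_abs _ _).trans ?_
    simpa using Finset.sum_le_sum fun j (_ : j ∈ Finset.univ) => abs_sin_le_one (x j - x i)
  calc |couplingForce κ x i| = |κ| / N * |∑ j, sin (x j - x i)| := by
        rw [couplingForce, abs_mul, abs_div, Nat.abs_cast]
    _ ≤ |κ| / N * N := by gcongr
    _ = |κ| := div_mul_cancel₀ _ hN.ne'

theorem neg_le_potential (κ : ℝ) (x : Fin N → ℝ) : -(|κ| * N / 2) ≤ potential κ x := by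
  have hsum : |∑ i, ∑ j, cos (x j - x i)| ≤ N * N := by
    refine (Finset.abs_sum_le_sum_abs _ _).trans ?_
    refine (Finset.sum_le_sum fun i _ => Finset.abs_sum_le_sum_abs _ _).trans ?_
    simpa using Finset.sum_le_sum fun i (_ : i ∈ Finset.univ) =>
      Finset.sum_le_sum fun j (_ : j ∈ Finset.univ) => abs_cos_le_one (x j - x i)
  have hconst : |κ| / (2 * N) * (N * N) = |κ| * N / 2 := by
    rcases eq_or_ne (N : ℝ) 0 with hN | hN
    · simp [hN]
    · field_simp
  calc -(|κ| * N / 2) ≤ -(|κ| / (2 * N) * |∑ i, ∑ j, cos (x j - x i)|) := by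
        rw [← hconst]; gcongr
    _ = -|κ / (2 * N) * ∑ i, ∑ j, cos (x j - x i)| := by
        rw [abs_mul, abs_div, abs_mul, abs_two, Nat.abs_cast]
    _ ≤ potential κ x := by
        rw [potential, neg_mul]
        exact neg_le_neg (le_abs_self _)

theorem neg_le_energy {m : ℝ} (hm : 0 ≤ m) (κ : ℝ) (x v : Fin N → ℝ) :
    -(|κ| * N / 2) ≤ energy m κ x v := by
  have : 0 ≤ m / 2 * ∑ i, v i ^ 2 := by positivity
  rw [energy]
  linarith [neg_le_potential κ x]

theorem sum_sum_sin_mul_sub (x v : Fin N → ℝ) :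
    ∑ i, ∑ j, sin (x j - x i) * (v j - v i) = -2 * ∑ i, (∑ j, sin (x j - x i)) * v i := by
  have hswap : ∑ i, ∑ j, sin (x j - x i) * v j = -∑ i, ∑ j, sin (x j - x i) * v i := by
    rw [Finset.sum_comm, ← Finset.sum_neg_distrib]
    refine Finset.sum_congr rfl fun i _ => ?_
    rw [← Finset.sum_neg_distrib]
    refine Finset.sum_congr rfl fun j _ => ?_
    rw [← neg_mul, ← sin_neg, neg_sub]
  simp only [mul_sub, Finset.sum_sub_distrib, hswap, Finset.sum_mul]
  ring

variable {κ : ℝ} {x : ℝ → Fin N → ℝ} {v : Fin N → ℝ} {t : ℝ}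

theorem hasDerivAt_couplingForce (hx : ∀ i, HasDerivAt (fun s => x s i) (v i) t) (i : Fin N) :
    HasDerivAt (fun s => couplingForce κ (x s) i)
      (κ / N * ∑ j, cos (x t j - x t i) * (v j - v i)) t :=
  (HasDerivAt.fun_sum fun j _ => ((hx j).sub (hx i)).sin).const_mul _

theorem hasDerivAt_potential (hx : ∀ i, HasDerivAt (fun s => x s i) (v i) t) :
    HasDerivAt (fun s => potential κ (x s)) (-∑ i, couplingForce κ (x t) i * v i) t := by
  have hsum := HasDerivAt.fun_sum fun i (_ : i ∈ Finset.univ) =>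
    HasDerivAt.fun_sum fun j (_ : j ∈ Finset.univ) => ((hx j).sub (hx i)).cos
  refine (hsum.const_mul (-(κ / (2 * N)))).congr_deriv ?_
  simp only [Pi.sub_apply, neg_mul, Finset.sum_neg_distrib, sum_sum_sin_mul_sub, couplingForce,
    mul_assoc, ← Finset.mul_sum]
  rcases eq_or_ne (N : ℝ) 0 with hN | hN
  · simp [hN]
  · field_simp

theorem couplingForce_isBigO_one (i : Fin N) :
    (fun t => couplingForce κ (x t) i) =O[atTop] fun _ => (1 : ℝ) :=
  IsBigO.of_bound |κ| <| Eventually.of_forall fun t => by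
    simpa using abs_couplingForce_le κ (x t) i

structure IsSolution (m γ κ : ℝ) (θ ω α : ℝ → Fin N → ℝ) : Prop where
  hasDerivAt_phase : ∀ t i, HasDerivAt (fun s => θ s i) (ω t i) t
  hasDerivAt_velocity : ∀ t i, HasDerivAt (fun s => ω s i) (α t i) t
  equation : ∀ t ≥ 0, ∀ i, m * α t i = -γ * ω t i + couplingForce κ (θ t) i

namespace IsSolution

variable {m γ : ℝ} {θ ω α : ℝ → Fin N → ℝ}

theorem hasDerivAt_sum_sq_velocity (hs : IsSolution m γ κ θ ω α) (t : ℝ) :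
    HasDerivAt (fun s => ∑ i, ω s i ^ 2) (∑ i, 2 * ω t i * α t i) t := by
  refine (HasDerivAt.fun_sum fun i _ => (hs.hasDerivAt_velocity t i).pow 2).congr_deriv ?_
  simp [mul_comm]

theorem hasDerivAt_energy (hs : IsSolution m γ κ θ ω α) (ht : 0 ≤ t) :
    HasDerivAt (fun s => energy m κ (θ s) (ω s)) (-γ * ∑ i, ω t i ^ 2) t := by
  refine (((hs.hasDerivAt_sum_sq_velocity t).const_mul (m / 2)).add
    (hasDerivAt_potential (hs.hasDerivAt_phase t))).congr_deriv ?_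
  simp only [Finset.mul_sum, ← Finset.sum_neg_distrib, ← Finset.sum_add_distrib]
  refine Finset.sum_congr rfl fun i _ => ?_
  linear_combination ω t i * hs.equation t ht i

theorem energy_antitoneOn (hs : IsSolution m γ κ θ ω α) (hγ : 0 ≤ γ) :
    AntitoneOn (fun t => energy m κ (θ t) (ω t)) (Ici 0) := by
  refine antitoneOn_of_hasDerivWithinAt_nonpos (convex_Ici 0)
    (fun t ht => (hs.hasDerivAt_energy ht).continuousAt.continuousWithinAt)
    (fun t ht => (hs.hasDerivAt_energy (interior_subset ht)).hasDerivWithinAt) fun t _ => ?_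
  have : 0 ≤ ∑ i, ω t i ^ 2 := Finset.sum_nonneg fun i _ => sq_nonneg _
  nlinarith

theorem velocity_isBigO_one (hs : IsSolution m γ κ θ ω α) (hm : 0 < m) (hγ : 0 ≤ γ)
    (i : Fin N) :
    (fun t => ω t i) =O[atTop] fun _ => (1 : ℝ) := by
  refine IsBigO.of_bound √((energy m κ (θ 0) (ω 0) + |κ| * N / 2) / (m / 2)) ?_
  filter_upwards [eventually_ge_atTop 0] with t ht
  rw [norm_one, mul_one, Real.norm_eq_abs]
  refine Real.abs_le_sqrt ?_
  rw [le_div_iff₀ (by positivity)]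
  have hE : energy m κ (θ t) (ω t) ≤ energy m κ (θ 0) (ω 0) :=
    hs.energy_antitoneOn hγ self_mem_Ici ht ht
  have hi : ω t i ^ 2 ≤ ∑ j, ω t j ^ 2 :=
    Finset.single_le_sum (fun j _ => sq_nonneg (ω t j)) (Finset.mem_univ i)
  have hkinetic := mul_le_mul_of_nonneg_left hi (by positivity : 0 ≤ m / 2)
  rw [energy] at hE
  linarith [neg_le_potential κ (θ t)]

theorem acceleration_eventuallyEq (hs : IsSolution m γ κ θ ω α) (hm : 0 < m) (i : Fin N) :
    (fun t => α t i) =ᶠ[atTop] fun t => m⁻¹ * (-γ * ω t i + couplingForce κ (θ t) i) := by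
  filter_upwards [eventually_ge_atTop 0] with t ht
  rw [← hs.equation t ht i, inv_mul_cancel_left₀ hm.ne']

theorem acceleration_isBigO_one (hs : IsSolution m γ κ θ ω α) (hm : 0 < m) (hγ : 0 ≤ γ)
    (i : Fin N) : (fun t => α t i) =O[atTop] fun _ => (1 : ℝ) :=
  ((((hs.velocity_isBigO_one hm hγ i).const_mul_left (-γ)).add
    (couplingForce_isBigO_one i)).const_mul_left m⁻¹).congr'
    (hs.acceleration_eventuallyEq hm i).symm EventuallyEq.rfl

theorem tendsto_velocity (hs : IsSolution m γ κ θ ω α) (hm : 0 < m) (hγ : 0 < γ)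
    (i : Fin N) :
    Tendsto (fun t => ω t i) atTop (𝓝 0) := by
  obtain ⟨E, hE⟩ := exists_tendsto_of_antitoneOn_Ici (hs.energy_antitoneOn hγ.le)
    fun t _ => neg_le_energy hm.le κ (θ t) (ω t)
  have hderiv : (fun t => -γ * ∑ j, 2 * ω t j * α t j) =O[atTop] fun _ => (1 : ℝ) := by
    refine (IsBigO.fun_sum fun j _ => ?_).const_mul_left _
    simpa using ((hs.velocity_isBigO_one hm hγ.le j).const_mul_left 2).mul
      (hs.acceleration_isBigO_one hm hγ.le j)
  have hdissipation := tendsto_zero_of_tendsto_of_hasDerivAt_of_isBigO_one hE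
    ((eventually_ge_atTop 0).mono fun t ht => hs.hasDerivAt_energy ht)
    (Eventually.of_forall fun t => (hs.hasDerivAt_sum_sq_velocity t).const_mul (-γ)) hderiv
  have hsum : Tendsto (fun t => ∑ j, ω t j ^ 2) atTop (𝓝 0) := by
    simpa [hγ.ne'] using hdissipation.const_mul (-γ⁻¹)
  have hsq : Tendsto (fun t => ω t i ^ 2) atTop (𝓝 0) :=
    squeeze_zero (fun t => sq_nonneg _)
      (fun t => Finset.single_le_sum (fun j _ => sq_nonneg (ω t j)) (Finset.mem_univ i)) hsum
  rw [tendsto_zero_iff_abs_tendsto_zero]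
  simpa [Function.comp_def, Real.sqrt_sq_eq_abs] using (continuous_sqrt.tendsto 0).comp hsq

theorem tendsto_acceleration (hs : IsSolution m γ κ θ ω α) (hm : 0 < m) (hγ : 0 < γ)
    (i : Fin N) :
    Tendsto (fun t => α t i) atTop (𝓝 0) := by
  have hjerk : (fun t => m⁻¹ * (-γ * α t i +
      κ / N * ∑ j, cos (θ t j - θ t i) * (ω t j - ω t i))) =O[atTop] fun _ => (1 : ℝ) := by
    refine (((hs.acceleration_isBigO_one hm hγ.le i).const_mul_left _).add
      ((IsBigO.fun_sum fun j _ => ?_).const_mul_left _)).const_mul_left _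
    have hcos : (fun t => cos (θ t j - θ t i)) =O[atTop] fun _ => (1 : ℝ) :=
      IsBigO.of_bound 1 (Eventually.of_forall fun t => by simpa using abs_cos_le_one _)
    simpa using hcos.mul ((hs.velocity_isBigO_one hm hγ.le j).sub
      (hs.velocity_isBigO_one hm hγ.le i))
  refine (tendsto_zero_of_tendsto_of_hasDerivAt_of_isBigO_one (hs.tendsto_velocity hm hγ i)
    ?_ (Eventually.of_forall fun t => ?_) hjerk).congr' (hs.acceleration_eventuallyEq hm i).symm
  · filter_upwards [hs.acceleration_eventuallyEq hm i] with t ht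
    exact ht ▸ hs.hasDerivAt_velocity t i
  · exact (((hs.hasDerivAt_velocity t i).const_mul (-γ)).add
      (hasDerivAt_couplingForce (hs.hasDerivAt_phase t) i)).const_mul m⁻¹

end IsSolution

end InertialKuramoto

end

open InertialKuramoto in
theorem kuramoto_inertia_acceleration_decay_general
    (N : ℕ)
    (m γ κ : ℝ) (hm : 0 < m) (hγ : 0 < γ)
    (θ : ℝ → Fin N → ℝ)
    (hreg : ∀ i, ContDiff ℝ 2 (fun t => θ t i))
    (hode : ∀ t ≥ (0:ℝ), ∀ i,
      m * deriv (deriv (fun s => θ s i)) t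
        = -γ * deriv (fun s => θ s i) t
          + (κ / N) * ∑ j, Real.sin (θ t j - θ t i)) :
    ∀ i, Tendsto (fun t => deriv (deriv (fun s => θ s i)) t)
      atTop (nhds 0) := by
  have hs : IsSolution m γ κ θ (fun t i => deriv (fun s => θ s i) t)
      (fun t i => deriv (deriv (fun s => θ s i)) t) :=
    { hasDerivAt_phase := fun t i => ((hreg i).differentiable two_ne_zero t).hasDerivAt
      hasDerivAt_velocity := fun t i => ((hreg i).differentiable_deriv_two t).hasDerivAt
      equation := hode }
  exact hs.tendsto_acceleration hm hγ

/-- Asymptotic vanishing of the angular accelerations for the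
inertial Kuramoto model of identical oscillators with all-to-all coupling,
under zero initial phase and frequency averages: `θ_i''(t) → 0` as `t → ∞`. -/
theorem kuramoto_inertia_acceleration_decay
    (N : ℕ) (hN : 1 ≤ N)
    (m γ κ : ℝ) (hm : 0 < m) (hγ : 0 < γ) (hκ : 0 < κ)
    (θ : ℝ → Fin N → ℝ)
    (hreg : ∀ i, ContDiff ℝ 2 (fun t => θ t i))
    (hode : ∀ t ≥ (0:ℝ), ∀ i,
      m * deriv (deriv (fun s => θ s i)) t
        = -γ * deriv (fun s => θ s i) t
          + (κ / N) * ∑ j, Real.sin (θ t j - θ t i))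
    (hθ0 : ∑ i, θ 0 i = 0)
    (hω0 : ∑ i, deriv (fun s => θ s i) 0 = 0) :
    ∀ i, Tendsto (fun t => deriv (deriv (fun s => θ s i)) t)
      atTop (nhds 0) :=
  kuramoto_inertia_acceleration_decay_general N m γ κ hm hγ θ hreg hode
end

section
/- Let θ : [0,∞) → ℝ^N solve the inertial Kuramoto model for N identical oscillators with all-to-all coupling, and suppose the initial data satisfy (m/N)·Σ_{i=1}^N ω_i(0)² ≤ κ·R_p(0)². Then complete synchronization emerges asymptotically: lim_{t→∞} |ω_i(t) − ω_j(t)| = 0 for all 1 ≤ i, j ≤ N. -/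
/-!
The energy `E = (m/2) ∑ ωᵢ² + (κ/2N) ∑ᵢⱼ (1 - cos (θⱼ - θᵢ))` is nonnegative and, by the
antisymmetry of the coupling, satisfies `E' = -γ ∑ ωᵢ²`. Hence every `ωᵢ` is bounded and
square integrable on `[0, ∞)`, the equation of motion bounds `ωᵢ'`, and Barbalat's lemma gives
`ωᵢ → 0` for every `i`.
-/

open Filter Set Topology intervalIntegral

section Barbalat

variable {f : ℝ → ℝ} {C : ℝ}

lemma mul_sq_le_integral_sq_of_abs_deriv_le (hf : Differentiable ℝ f)
    (hf' : ∀ t ≥ 0, |deriv f t| ≤ C) {t h ε : ℝ} (ht : 0 ≤ t) (hh : 0 ≤ h) (hε : 0 ≤ ε)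
    (hCh : C * h ≤ ε / 2) (hft : ε ≤ |f t|) :
    h * (ε / 2) ^ 2 ≤ ∫ s in t..t + h, f s ^ 2 := by
  have hC : 0 ≤ C := (abs_nonneg _).trans (hf' t ht)
  have hlow : ∀ s ∈ Icc t (t + h), (ε / 2) ^ 2 ≤ f s ^ 2 := by
    rintro s ⟨hts, hsh⟩
    have hlip : |f s - f t| ≤ C * |s - t| := by
      simpa only [Real.norm_eq_abs] using (convex_Ici 0).norm_image_sub_le_of_norm_deriv_le
        (fun x _ => hf x) hf' ht (ht.trans hts)
    have hst : C * |s - t| ≤ C * h := by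
      gcongr
      rw [abs_of_nonneg (sub_nonneg.2 hts)]
      linarith
    have hrev := abs_sub_abs_le_abs_sub (f t) (f s)
    rw [abs_sub_comm] at hrev
    rw [← sq_abs (f s)]
    gcongr
    linarith
  calc h * (ε / 2) ^ 2 = ∫ _ in t..t + h, (ε / 2) ^ 2 := by simp
    _ ≤ ∫ s in t..t + h, f s ^ 2 :=
      integral_mono_on (by linarith) intervalIntegrable_const
        ((hf.continuous.pow 2).intervalIntegrable _ _) hlow

/-- Barbalat's lemma. -/
theorem tendsto_zero_of_integral_sq_le (hf : Differentiable ℝ f)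
    (hf' : ∀ t ≥ 0, |deriv f t| ≤ C) {L : ℝ} (hL : ∀ T ≥ 0, ∫ t in 0..T, f t ^ 2 ≤ L) :
    Tendsto f atTop (𝓝 0) := by
  set F : ℝ → ℝ := fun T => ∫ t in 0..T, f t ^ 2
  have hF_sub : ∀ a b, F b - F a = ∫ t in a..b, f t ^ 2 := fun a b =>
    integral_interval_sub_left ((hf.continuous.pow 2).intervalIntegrable _ _)
      ((hf.continuous.pow 2).intervalIntegrable _ _)
  have hF_mono : Monotone F := fun a b hab =>
    sub_nonneg.1 <| (hF_sub a b).symm ▸ integral_nonneg hab fun _ _ => sq_nonneg _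
  have hF_bdd : BddAbove (range F) := ⟨L, forall_mem_range.2 fun T =>
    (hF_mono (le_max_left T 0)).trans (hL _ (le_max_right T 0))⟩
  have hF_window : ∀ h, Tendsto (fun t => ∫ s in t..t + h, f s ^ 2) atTop (𝓝 0) := by
    intro h
    have hlim := tendsto_atTop_ciSup hF_mono hF_bdd
    simpa only [Function.comp_def, id, hF_sub, sub_self] using
      (hlim.comp (tendsto_atTop_add_const_right _ h tendsto_id)).sub hlim
  have hC : 0 ≤ C := (abs_nonneg _).trans (hf' 0 le_rfl)
  refine Metric.tendsto_nhds.2 fun ε hε => ?_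
  set h := ε / (2 * (C + 1)) with h_def
  have hh : 0 < h := by positivity
  have hCh : C * h ≤ ε / 2 := calc
    C * h ≤ (C + 1) * h := by gcongr; linarith
    _ = ε / 2 := by rw [h_def]; field_simp
  filter_upwards [eventually_ge_atTop 0,
    (hF_window h).eventually (gt_mem_nhds (by positivity : 0 < h * (ε / 2) ^ 2))]
    with t ht hsmall
  rw [Real.dist_0_eq_abs]
  by_contra! hft
  linarith [mul_sq_le_integral_sq_of_abs_deriv_le hf hf' ht hh.le hε.le hCh hft]

end Barbalat

section Kuramoto

variable {N : ℕ} {m γ κ : ℝ}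

noncomputable def kuramotoEnergy (m κ : ℝ) (θ ω : Fin N → ℝ) : ℝ :=
  m / 2 * ∑ i, ω i ^ 2 + κ / (2 * N) * ∑ i, ∑ j, (1 - Real.cos (θ j - θ i))

lemma mul_sum_sum_one_sub_cos_nonneg (hκ : 0 ≤ κ) (θ : Fin N → ℝ) :
    0 ≤ κ / (2 * N) * ∑ i, ∑ j, (1 - Real.cos (θ j - θ i)) :=
  mul_nonneg (by positivity) <| Finset.sum_nonneg fun _ _ => Finset.sum_nonneg fun _ _ =>
    sub_nonneg.2 (Real.cos_le_one _)

lemma kuramotoEnergy_nonneg (hm : 0 ≤ m) (hκ : 0 ≤ κ) (θ ω : Fin N → ℝ) :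
    0 ≤ kuramotoEnergy m κ θ ω :=
  add_nonneg (by positivity) (mul_sum_sum_one_sub_cos_nonneg hκ θ)

lemma mul_sq_le_kuramotoEnergy (hm : 0 ≤ m) (hκ : 0 ≤ κ) (θ ω : Fin N → ℝ) (i : Fin N) :
    m / 2 * ω i ^ 2 ≤ kuramotoEnergy m κ θ ω := by
  have hi : ω i ^ 2 ≤ ∑ k, ω k ^ 2 :=
    Finset.single_le_sum (fun k _ => sq_nonneg (ω k)) (Finset.mem_univ i)
  have := mul_sum_sum_one_sub_cos_nonneg hκ θ
  unfold kuramotoEnergy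
  nlinarith

lemma sum_sum_sin_sub_mul_sub (θ ω : Fin N → ℝ) :
    ∑ i, ∑ j, Real.sin (θ j - θ i) * (ω j - ω i)
      = -2 * ∑ i, ω i * ∑ j, Real.sin (θ j - θ i) := by
  have hswap : ∑ i, ∑ j, Real.sin (θ j - θ i) * ω j
      = -∑ i, ω i * ∑ j, Real.sin (θ j - θ i) := by
    rw [Finset.sum_comm]
    simp only [Finset.mul_sum, ← Finset.sum_neg_distrib]
    refine Finset.sum_congr rfl fun i _ => Finset.sum_congr rfl fun j _ => ?_
    rw [← neg_sub, Real.sin_neg]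
    ring
  have hdiag : ∑ i, ∑ j, Real.sin (θ j - θ i) * ω i
      = ∑ i, ω i * ∑ j, Real.sin (θ j - θ i) :=
    Finset.sum_congr rfl fun i _ => by rw [Finset.mul_sum]; simp only [mul_comm]
  simp only [mul_sub, Finset.sum_sub_distrib, hswap, hdiag]
  ring

lemma kuramoto_dissipation_identity {θ ω a : Fin N → ℝ}
    (h : ∀ i, m * a i = -γ * ω i + κ / N * ∑ j, Real.sin (θ j - θ i)) :
    m * ∑ i, ω i * a i + κ / (2 * N) * ∑ i, ∑ j, Real.sin (θ j - θ i) * (ω j - ω i)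
      = -γ * ∑ i, ω i ^ 2 := by
  have hkin : m * ∑ i, ω i * a i
      = -γ * ∑ i, ω i ^ 2 + κ / N * ∑ i, ω i * ∑ j, Real.sin (θ j - θ i) := by
    calc m * ∑ i, ω i * a i = ∑ i, ω i * (m * a i) := by
          rw [Finset.mul_sum]; exact Finset.sum_congr rfl fun i _ => by ring
      _ = ∑ i, (-γ * ω i ^ 2 + κ / N * (ω i * ∑ j, Real.sin (θ j - θ i))) :=
          Finset.sum_congr rfl fun i _ => by rw [h]; ring
      _ = _ := by rw [Finset.sum_add_distrib, ← Finset.mul_sum, ← Finset.mul_sum]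
  rw [hkin, sum_sum_sin_sub_mul_sub]
  ring

lemma abs_coupling_le (hκ : 0 ≤ κ) (θ : Fin N → ℝ) (i : Fin N) :
    |κ / N * ∑ j, Real.sin (θ j - θ i)| ≤ κ := by
  have hsum : |∑ j, Real.sin (θ j - θ i)| ≤ N :=
    (Finset.abs_sum_le_sum_abs _ _).trans <| by
      simpa using Finset.sum_le_sum fun j (_ : j ∈ Finset.univ) => Real.abs_sin_le_one (θ j - θ i)
  rw [abs_mul, abs_of_nonneg (by positivity)]
  rcases N.eq_zero_or_pos with rfl | hN
  · simp [hκ]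
  · calc κ / N * |∑ j, Real.sin (θ j - θ i)| ≤ κ / N * N := by gcongr
      _ = κ := div_mul_cancel₀ κ (by positivity)

lemma hasDerivAt_kuramotoEnergy {θ ω : ℝ → Fin N → ℝ} {a : Fin N → ℝ} {t : ℝ}
    (hθ : ∀ i, HasDerivAt (fun s => θ s i) (ω t i) t)
    (hω : ∀ i, HasDerivAt (fun s => ω s i) (a i) t) :
    HasDerivAt (fun s => kuramotoEnergy m κ (θ s) (ω s))
      (m * ∑ i, ω t i * a i
        + κ / (2 * N) * ∑ i, ∑ j, Real.sin (θ t j - θ t i) * (ω t j - ω t i)) t := by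
  have hkin : HasDerivAt (fun s => ∑ i, ω s i ^ 2) (∑ i, 2 * ω t i * a i) t :=
    HasDerivAt.fun_sum fun i _ => by simpa using (hω i).fun_pow 2
  have hpot : HasDerivAt (fun s => ∑ i, ∑ j, (1 - Real.cos (θ s j - θ s i)))
      (∑ i, ∑ j, Real.sin (θ t j - θ t i) * (ω t j - ω t i)) t :=
    HasDerivAt.fun_sum fun i _ => HasDerivAt.fun_sum fun j _ => by
      simpa using (((hθ j).sub (hθ i)).cos.const_sub 1)
  refine ((hkin.const_mul (m / 2)).add (hpot.const_mul (κ / (2 * N)))).congr_deriv ?_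
  congr 1
  rw [Finset.mul_sum, Finset.mul_sum]
  exact Finset.sum_congr rfl fun i _ => by ring

noncomputable def frequency (θ : ℝ → Fin N → ℝ) (t : ℝ) (i : Fin N) : ℝ :=
  deriv (fun s => θ s i) t

structure IsInertialKuramotoSolution (m γ κ : ℝ) (θ : ℝ → Fin N → ℝ) : Prop where
  contDiff : ∀ i, ContDiff ℝ 2 fun t => θ t i
  ode : ∀ t ≥ (0 : ℝ), ∀ i, m * deriv (fun s => frequency θ s i) t
    = -γ * frequency θ t i + κ / N * ∑ j, Real.sin (θ t j - θ t i)

namespace IsInertialKuramotoSolution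

variable {θ : ℝ → Fin N → ℝ}

lemma differentiable (hθ : IsInertialKuramotoSolution m γ κ θ) (i : Fin N) :
    Differentiable ℝ fun t => θ t i :=
  (hθ.contDiff i).differentiable (by norm_num)

lemma differentiable_frequency (hθ : IsInertialKuramotoSolution m γ κ θ) (i : Fin N) :
    Differentiable ℝ fun t => frequency θ t i :=
  ((hθ.contDiff i).deriv' (n := 1)).differentiable one_ne_zero

lemma hasDerivAt_energy (hθ : IsInertialKuramotoSolution m γ κ θ) {t : ℝ} (ht : 0 ≤ t) :
    HasDerivAt (fun s => kuramotoEnergy m κ (θ s) (frequency θ s))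
      (-γ * ∑ i, frequency θ t i ^ 2) t := by
  rw [← kuramoto_dissipation_identity (hθ.ode t ht)]
  exact hasDerivAt_kuramotoEnergy (fun i => (hθ.differentiable i t).hasDerivAt)
    fun i => (hθ.differentiable_frequency i t).hasDerivAt

lemma energy_add_integral_eq (hθ : IsInertialKuramotoSolution m γ κ θ) {T : ℝ} (hT : 0 ≤ T) :
    kuramotoEnergy m κ (θ T) (frequency θ T) + γ * ∫ t in 0..T, ∑ i, frequency θ t i ^ 2
      = kuramotoEnergy m κ (θ 0) (frequency θ 0) := by
  have hcont : Continuous fun t => ∑ i, frequency θ t i ^ 2 :=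
    continuous_finsetSum _ fun i _ => (hθ.differentiable_frequency i).continuous.pow 2
  have hFTC := integral_eq_sub_of_hasDerivAt
    (fun t ht => hθ.hasDerivAt_energy (by rw [uIcc_of_le hT] at ht; exact ht.1))
    ((continuous_const.mul hcont).intervalIntegrable 0 T)
  rw [intervalIntegral.integral_const_mul] at hFTC
  linarith

lemma energy_le (hθ : IsInertialKuramotoSolution m γ κ θ) (hγ : 0 ≤ γ) {T : ℝ} (hT : 0 ≤ T) :
    kuramotoEnergy m κ (θ T) (frequency θ T) ≤ kuramotoEnergy m κ (θ 0) (frequency θ 0) := by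
  have hint : 0 ≤ ∫ t in 0..T, ∑ i, frequency θ t i ^ 2 :=
    integral_nonneg hT fun _ _ => Finset.sum_nonneg fun _ _ => sq_nonneg _
  nlinarith [hθ.energy_add_integral_eq hT]

lemma integral_sq_frequency_le (hθ : IsInertialKuramotoSolution m γ κ θ) (hm : 0 ≤ m)
    (hγ : 0 < γ) (hκ : 0 ≤ κ) (i : Fin N) {T : ℝ} (hT : 0 ≤ T) :
    ∫ t in 0..T, frequency θ t i ^ 2 ≤ kuramotoEnergy m κ (θ 0) (frequency θ 0) / γ := by
  have hle : ∫ t in 0..T, frequency θ t i ^ 2 ≤ ∫ t in 0..T, ∑ k, frequency θ t k ^ 2 :=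
    integral_mono_on hT
      (((hθ.differentiable_frequency i).continuous.pow 2).intervalIntegrable _ _)
      ((continuous_finsetSum _ fun k _ =>
        (hθ.differentiable_frequency k).continuous.pow 2).intervalIntegrable _ _)
      fun t _ => Finset.single_le_sum (fun k _ => sq_nonneg (frequency θ t k))
        (Finset.mem_univ i)
  rw [le_div_iff₀ hγ]
  nlinarith [hθ.energy_add_integral_eq hT, kuramotoEnergy_nonneg hm hκ (θ T) (frequency θ T)]

lemma abs_frequency_le (hθ : IsInertialKuramotoSolution m γ κ θ) (hm : 0 < m)
    (hγ : 0 ≤ γ) (hκ : 0 ≤ κ) (i : Fin N) {t : ℝ} (ht : 0 ≤ t) :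
    |frequency θ t i| ≤ √(2 * kuramotoEnergy m κ (θ 0) (frequency θ 0) / m) :=
  Real.abs_le_sqrt <| by
    rw [le_div_iff₀ hm]
    nlinarith [mul_sq_le_kuramotoEnergy hm.le hκ (θ t) (frequency θ t) i, hθ.energy_le hγ ht]

lemma abs_deriv_frequency_le (hθ : IsInertialKuramotoSolution m γ κ θ) (hm : 0 < m)
    (hγ : 0 ≤ γ) (hκ : 0 ≤ κ) (i : Fin N) {t : ℝ} (ht : 0 ≤ t) :
    |deriv (fun s => frequency θ s i) t|
      ≤ (γ * √(2 * kuramotoEnergy m κ (θ 0) (frequency θ 0) / m) + κ) / m := by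
  rw [le_div_iff₀ hm]
  calc |deriv (fun s => frequency θ s i) t| * m
      = |m * deriv (fun s => frequency θ s i) t| := by rw [abs_mul, abs_of_pos hm, mul_comm]
    _ = |-γ * frequency θ t i + κ / N * ∑ j, Real.sin (θ t j - θ t i)| := by rw [hθ.ode t ht]
    _ ≤ |-γ * frequency θ t i| + |κ / N * ∑ j, Real.sin (θ t j - θ t i)| := abs_add_le _ _
    _ ≤ γ * √(2 * kuramotoEnergy m κ (θ 0) (frequency θ 0) / m) + κ := by
      rw [abs_mul, abs_neg, abs_of_nonneg hγ]
      gcongr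
      exacts [hθ.abs_frequency_le hm hγ hκ i ht, abs_coupling_le hκ _ _]

lemma tendsto_frequency (hθ : IsInertialKuramotoSolution m γ κ θ) (hm : 0 < m) (hγ : 0 < γ)
    (hκ : 0 ≤ κ) (i : Fin N) : Tendsto (fun t => frequency θ t i) atTop (𝓝 0) :=
  tendsto_zero_of_integral_sq_le (hθ.differentiable_frequency i)
    (fun _ ht => hθ.abs_deriv_frequency_le hm hγ.le hκ i ht)
    (fun _ hT => hθ.integral_sq_frequency_le hm.le hγ hκ i hT)

end IsInertialKuramotoSolution

end Kuramoto

theorem kuramoto_inertia_complete_synchronization_general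
    (N : ℕ)
    (m γ κ : ℝ) (hm : 0 < m) (hγ : 0 < γ) (hκ : 0 < κ)
    (θ : ℝ → Fin N → ℝ)
    (hreg : ∀ i, ContDiff ℝ 2 (fun t => θ t i))
    (hode : ∀ t ≥ (0:ℝ), ∀ i,
      m * deriv (deriv (fun s => θ s i)) t
        = -γ * deriv (fun s => θ s i) t
          + (κ / N) * ∑ j, Real.sin (θ t j - θ t i)) :
    ∀ i j, Tendsto
      (fun t => |deriv (fun s => θ s i) t - deriv (fun s => θ s j) t|)
      atTop (nhds 0) := by
  have hθ : IsInertialKuramotoSolution m γ κ θ := ⟨hreg, hode⟩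
  intro i j
  have h := ((hθ.tendsto_frequency hm hγ hκ.le i).sub (hθ.tendsto_frequency hm hγ hκ.le j)).abs
  rwa [sub_self, abs_zero] at h

/-- Complete frequency synchronization for the inertial Kuramoto
model of identical oscillators with all-to-all coupling, under the initial
condition `(m/N)·Σ_i ω_i(0)² ≤ κ·R_p(0)²`:
`|ω_i(t) − ω_j(t)| → 0` as `t → ∞` for all `i, j`. -/
theorem kuramoto_inertia_complete_synchronization
    (N : ℕ) (hN : 1 ≤ N)
    (m γ κ : ℝ) (hm : 0 < m) (hγ : 0 < γ) (hκ : 0 < κ)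
    (θ : ℝ → Fin N → ℝ)
    (hreg : ∀ i, ContDiff ℝ 2 (fun t => θ t i))
    (hode : ∀ t ≥ (0:ℝ), ∀ i,
      m * deriv (deriv (fun s => θ s i)) t
        = -γ * deriv (fun s => θ s i) t
          + (κ / N) * ∑ j, Real.sin (θ t j - θ t i))
    (Rp : ℝ → ℝ)
    (hRp : Rp = fun t =>
      ‖(N : ℂ)⁻¹ * ∑ j, Complex.exp (Complex.I * (θ t j : ℂ))‖)
    (hinit : (m / N) * ∑ i, (deriv (fun s => θ s i) 0) ^ 2 ≤ κ * (Rp 0) ^ 2) :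
    ∀ i j, Tendsto
      (fun t => |deriv (fun s => θ s i) t - deriv (fun s => θ s j) t|)
      atTop (nhds 0) :=
  kuramoto_inertia_complete_synchronization_general N m γ κ hm hγ hκ θ hreg hode
end

section
/- Let θ : [0,∞) → ℝ^N solve the inertial Kuramoto model on a symmetric network with heterogeneous inertia and friction, and suppose there exist ā > 0 and δ ≥ 0 such that Σ_{j=1}^N |a_{ij} − ā| ≤ δ for every i, and such that the initial data satisfy J > 3δN + δ²/ā, where J := Σ_{i,j=1}^N a_{ij}·cos(θ_i(0) − θ_j(0)) − Σ_{i=1}^N m_i·ω_i(0)². Then the order parameters admit the uniform-in-time lower bounds: for all t ≥ 0 and all i, R_p(t)² ≥ (J − δN)/(ā·N²) and R_{p,i}(t)² ≥ ā·(J − 3δN) − δ² > 0. -/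
/-!
The energy `E = ∑ a_ij cos (θ_i - θ_j) - ∑ m_i ω_i²` is nondecreasing along solutions, since by
the symmetry of `a` its derivative is `2 ∑ γ_i ω_i²`. Hence at every time the coupling potential
is at least `J`. Replacing the `a_ij` by `ā` changes that potential by at most `δN` and each
local sum `∑_j a_ij e^{iθ_j}` by at most `δ`, while for the uniform network the potential equals
`ā |∑_j e^{iθ_j}|²`. This gives `ā |∑_j e^{iθ_j}|² ≥ J - δN`, which is the global bound, and
`R_{p,i} ≥ ā |∑_j e^{iθ_j}| - δ`, which together with `|∑_j e^{iθ_j}| ≤ N` gives the local one.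
-/

open Finset

noncomputable section

namespace Kuramoto

variable {ι : Type*} [Fintype ι]

def couplingPotential (a : ι → ι → ℝ) (x : ι → ℝ) : ℝ :=
  ∑ i, ∑ j, a i j * Real.cos (x i - x j)

def kineticEnergy (m v : ι → ℝ) : ℝ :=
  ∑ i, m i * v i ^ 2

theorem kineticEnergy_nonneg {m : ι → ℝ} (hm : ∀ i, 0 ≤ m i) (v : ι → ℝ) :
    0 ≤ kineticEnergy m v :=
  sum_nonneg fun i _ => mul_nonneg (hm i) (sq_nonneg _)

theorem sum_sum_mul_sin_sub_mul_sub {a : ι → ι → ℝ} (hsym : ∀ i j, a i j = a j i)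
    (x v : ι → ℝ) :
    ∑ i, ∑ j, a i j * (Real.sin (x j - x i) * (v i - v j))
      = 2 * ∑ i, v i * ∑ j, a i j * Real.sin (x j - x i) := by
  have hswap : ∑ i, ∑ j, a i j * Real.sin (x j - x i) * v j
      = -∑ i, v i * ∑ j, a i j * Real.sin (x j - x i) := by
    rw [sum_comm, ← sum_neg_distrib]
    refine sum_congr rfl fun i _ => ?_
    rw [mul_sum, ← sum_neg_distrib]
    refine sum_congr rfl fun j _ => ?_
    rw [hsym j i, ← neg_sub, Real.sin_neg]
    ring
  have hsplit : ∑ i, ∑ j, a i j * (Real.sin (x j - x i) * (v i - v j))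
      = ∑ i, v i * ∑ j, a i j * Real.sin (x j - x i)
        - ∑ i, ∑ j, a i j * Real.sin (x j - x i) * v j := by
    rw [← sum_sub_distrib]
    refine sum_congr rfl fun i _ => ?_
    rw [mul_sum, ← sum_sub_distrib]
    exact sum_congr rfl fun j _ => by ring
  rw [hsplit, hswap]
  ring

theorem hasDerivAt_couplingPotential {a : ι → ι → ℝ} (hsym : ∀ i j, a i j = a j i)
    {x : ℝ → ι → ℝ} {v : ι → ℝ} {t : ℝ} (hx : ∀ i, HasDerivAt (fun s => x s i) (v i) t) :
    HasDerivAt (fun s => couplingPotential a (x s))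
      (2 * ∑ i, v i * ∑ j, a i j * Real.sin (x t j - x t i)) t := by
  rw [← sum_sum_mul_sin_sub_mul_sub hsym]
  refine HasDerivAt.fun_sum fun i _ => HasDerivAt.fun_sum fun j _ => ?_
  refine ((((hx i).sub (hx j)).cos).const_mul (a i j)).congr_deriv ?_
  rw [← neg_sub (x t i), Real.sin_neg]
  simp only [Pi.sub_apply]

theorem hasDerivAt_kineticEnergy (m : ι → ℝ) {v : ℝ → ι → ℝ} {w : ι → ℝ} {t : ℝ}
    (hv : ∀ i, HasDerivAt (fun s => v s i) (w i) t) :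
    HasDerivAt (fun s => kineticEnergy m (v s)) (2 * ∑ i, m i * v t i * w i) t := by
  rw [mul_sum]
  refine HasDerivAt.fun_sum fun i _ => (((hv i).pow 2).const_mul (m i)).congr_deriv ?_
  push_cast
  ring

theorem monotoneOn_couplingPotential_sub_kineticEnergy {m γ : ι → ℝ} (hγ : ∀ i, 0 ≤ γ i)
    {a : ι → ι → ℝ} (hsym : ∀ i j, a i j = a j i) {θ : ℝ → ι → ℝ}
    (hreg : ∀ i, ContDiff ℝ 2 (fun t => θ t i))
    (hode : ∀ t ≥ (0:ℝ), ∀ i,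
      m i * deriv (deriv (fun s => θ s i)) t
        = -γ i * deriv (fun s => θ s i) t + ∑ j, a i j * Real.sin (θ t j - θ t i)) :
    MonotoneOn (fun t => couplingPotential a (θ t)
      - kineticEnergy m (fun i => deriv (fun s => θ s i) t)) (Set.Ici 0) := by
  have hθ : ∀ t i, HasDerivAt (fun s => θ s i) (deriv (fun s => θ s i) t) t := fun t i =>
    ((hreg i).differentiable two_ne_zero).differentiableAt.hasDerivAt
  have hω : ∀ t i, HasDerivAt (fun s => deriv (fun s => θ s i) s)
      (deriv (deriv (fun s => θ s i)) t) t := fun t i =>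
    (hreg i).differentiable_deriv_two.differentiableAt.hasDerivAt
  have hE : ∀ t, HasDerivAt (fun t => couplingPotential a (θ t)
      - kineticEnergy m (fun i => deriv (fun s => θ s i) t)) _ t := fun t =>
    (hasDerivAt_couplingPotential hsym (hθ t)).sub (hasDerivAt_kineticEnergy m (hω t))
  refine monotoneOn_of_deriv_nonneg (convex_Ici 0)
    (fun t _ => (hE t).continuousAt.continuousWithinAt)
    (fun t _ => (hE t).differentiableAt.differentiableWithinAt) fun t ht => ?_
  rw [interior_Ici] at ht
  rw [(hE t).deriv, ← mul_sub, ← sum_sub_distrib]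
  refine mul_nonneg zero_le_two (sum_nonneg fun i _ => ?_)
  rw [mul_assoc, mul_left_comm, hode t (le_of_lt ht) i]
  nlinarith [hγ i, sq_nonneg (deriv (fun s => θ s i) t)]

theorem norm_sum_exp_mul_I_sq (x : ι → ℝ) :
    ‖∑ j, Complex.exp (Complex.I * x j)‖ ^ 2 = ∑ j, ∑ k, Real.cos (x j - x k) := by
  have hre : (∑ j, Complex.exp (Complex.I * x j)).re = ∑ j, Real.cos (x j) := by
    simp only [Complex.re_sum, mul_comm Complex.I, Complex.exp_ofReal_mul_I_re]
  have him : (∑ j, Complex.exp (Complex.I * x j)).im = ∑ j, Real.sin (x j) := by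
    simp only [Complex.im_sum, mul_comm Complex.I, Complex.exp_ofReal_mul_I_im]
  rw [Complex.sq_norm, Complex.normSq_apply, hre, him, Fintype.sum_mul_sum,
    Fintype.sum_mul_sum, ← sum_add_distrib]
  refine sum_congr rfl fun j _ => ?_
  rw [← sum_add_distrib]
  exact sum_congr rfl fun k _ => (Real.cos_sub _ _).symm

theorem norm_sum_exp_mul_I_le (x : ι → ℝ) :
    ‖∑ j, Complex.exp (Complex.I * x j)‖ ≤ Fintype.card ι := by
  refine (norm_sum_le _ _).trans (le_of_eq ?_)
  simp [Complex.norm_exp]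

theorem couplingPotential_const (b : ℝ) (x : ι → ℝ) :
    couplingPotential (fun _ _ => b) x = b * ‖∑ j, Complex.exp (Complex.I * x j)‖ ^ 2 := by
  simp only [couplingPotential, norm_sum_exp_mul_I_sq, mul_sum]

theorem abs_couplingPotential_sub_le (a b : ι → ι → ℝ) (x : ι → ℝ) :
    |couplingPotential a x - couplingPotential b x| ≤ ∑ i, ∑ j, |a i j - b i j| := by
  simp only [couplingPotential, ← sum_sub_distrib, ← sub_mul]
  refine (abs_sum_le_sum_abs _ _).trans (sum_le_sum fun i _ => ?_)
  refine (abs_sum_le_sum_abs _ _).trans (sum_le_sum fun j _ => ?_)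
  rw [abs_mul]
  exact mul_le_of_le_one_right (abs_nonneg _) (Real.abs_cos_le_one _)

theorem norm_sum_mul_exp_mul_I_sub_le (c : ι → ℝ) (b : ℝ) (x : ι → ℝ) :
    ‖∑ j, (c j : ℂ) * Complex.exp (Complex.I * x j) - b * ∑ j, Complex.exp (Complex.I * x j)‖
      ≤ ∑ j, |c j - b| := by
  rw [mul_sum, ← sum_sub_distrib]
  refine (norm_sum_le _ _).trans (le_of_eq (sum_congr rfl fun j _ => ?_))
  rw [← sub_mul, ← Complex.ofReal_sub, norm_mul, Complex.norm_real, Real.norm_eq_abs,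
    mul_comm Complex.I, Complex.norm_exp_ofReal_mul_I, mul_one]

theorem couplingPotential_sub_le_mul_norm_sum_exp_sq {a : ι → ι → ℝ} {b δ : ℝ}
    (hnet : ∀ i, ∑ j, |a i j - b| ≤ δ) (x : ι → ℝ) :
    couplingPotential a x - δ * Fintype.card ι
      ≤ b * ‖∑ j, Complex.exp (Complex.I * x j)‖ ^ 2 := by
  have hnear := abs_couplingPotential_sub_le a (fun _ _ => b) x
  rw [couplingPotential_const] at hnear
  have hsum : ∑ i, ∑ j, |a i j - b| ≤ δ * Fintype.card ι := by
    simpa [mul_comm] using sum_le_card_nsmul univ _ δ fun i _ => hnet i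
  linarith [le_abs_self (couplingPotential a x - b * ‖∑ j, Complex.exp (Complex.I * x j)‖ ^ 2)]

theorem mul_norm_sum_exp_sub_le_norm_sum_mul_exp (c : ι → ℝ) {b : ℝ} (hb : 0 ≤ b)
    (x : ι → ℝ) :
    b * ‖∑ j, Complex.exp (Complex.I * x j)‖ - ∑ j, |c j - b|
      ≤ ‖∑ j, (c j : ℂ) * Complex.exp (Complex.I * x j)‖ := by
  have htri := norm_sub_norm_le ((b : ℂ) * ∑ j, Complex.exp (Complex.I * x j))
    (∑ j, (c j : ℂ) * Complex.exp (Complex.I * x j))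
  rw [norm_sub_rev, norm_mul, Complex.norm_real, Real.norm_of_nonneg hb] at htri
  linarith [norm_sum_mul_exp_mul_I_sub_le c b x]

end Kuramoto

end

open Finset Kuramoto in
theorem kuramoto_heterogeneous_order_parameter_lower_bound_general
    (N : ℕ)
    (m γ : Fin N → ℝ) (hm : ∀ i, 0 < m i) (hγ : ∀ i, 0 < γ i)
    (a : Fin N → Fin N → ℝ)
    (hsym : ∀ i j, a i j = a j i)
    (θ : ℝ → Fin N → ℝ)
    (hreg : ∀ i, ContDiff ℝ 2 (fun t => θ t i))
    (hode : ∀ t ≥ (0:ℝ), ∀ i,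
      m i * deriv (deriv (fun s => θ s i)) t
        = -γ i * deriv (fun s => θ s i) t
          + ∑ j, a i j * Real.sin (θ t j - θ t i))
    (abar δ : ℝ) (habar : 0 < abar)
    (hnet : ∀ i, ∑ j, |a i j - abar| ≤ δ)
    (J : ℝ)
    (hJ : J = ∑ i, ∑ j, a i j * Real.cos (θ 0 i - θ 0 j)
      - ∑ i, m i * (deriv (fun s => θ s i) 0) ^ 2)
    (hinit : J > 3 * δ * N + δ ^ 2 / abar)
    (Rp : ℝ → ℝ)
    (hRp : Rp = fun t =>
      ‖(N : ℂ)⁻¹ * ∑ j, Complex.exp (Complex.I * (θ t j : ℂ))‖)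
    (Rpi : Fin N → ℝ → ℝ)
    (hRpi : Rpi = fun i t =>
      ‖∑ j, (a i j : ℂ) * Complex.exp (Complex.I * (θ t j : ℂ))‖) :
    ∀ t ≥ (0:ℝ), ∀ i,
      (J - δ * N) / (abar * N ^ 2) ≤ (Rp t) ^ 2 ∧
      abar * (J - 3 * δ * N) - δ ^ 2 ≤ (Rpi i t) ^ 2 ∧
      0 < abar * (J - 3 * δ * N) - δ ^ 2 := by
  subst hRp hRpi
  intro t ht i
  dsimp only
  set z := ∑ j, Complex.exp (Complex.I * (θ t j : ℂ))
  have hδ : 0 ≤ δ := (sum_nonneg fun j _ => abs_nonneg _).trans (hnet i)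
  have hpot : J ≤ couplingPotential a (θ t) := by
    rw [hJ]
    exact (monotoneOn_couplingPotential_sub_kineticEnergy (fun i => (hγ i).le) hsym hreg hode
      Set.self_mem_Ici ht ht).trans (sub_le_self _ (kineticEnergy_nonneg (fun i => (hm i).le) _))
  have hglobal : J - δ * N ≤ abar * ‖z‖ ^ 2 := by
    simpa using (sub_le_sub_right hpot _).trans
      (couplingPotential_sub_le_mul_norm_sum_exp_sq hnet (θ t))
  have hlocal := (sub_le_sub_left (hnet i) _).trans
    (mul_norm_sum_exp_sub_le_norm_sum_mul_exp (a i) habar.le (θ t))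
  have hz : ‖z‖ ≤ N := by simpa using norm_sum_exp_mul_I_le (θ t)
  have hgap : δ ^ 2 < abar * (J - 3 * δ * N) := by
    have := mul_lt_mul_of_pos_left (lt_sub_iff_add_lt'.mpr hinit) habar
    rwa [mul_div_cancel₀ _ habar.ne'] at this
  have hδz : δ ≤ abar * ‖z‖ := by
    refine (pow_le_pow_iff_left₀ hδ (by positivity) two_ne_zero).mp ?_
    nlinarith [mul_le_mul_of_nonneg_left hglobal habar.le,
      mul_nonneg habar.le (mul_nonneg hδ (Nat.cast_nonneg N))]
  refine ⟨?_, ?_, sub_pos.mpr hgap⟩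
  · rw [norm_mul, norm_inv, Complex.norm_natCast, mul_pow, inv_pow, inv_mul_eq_div, ← div_div]
    exact div_le_div_of_nonneg_right ((div_le_iff₀' habar).mpr hglobal) (sq_nonneg _)
  · -- `(ā‖z‖ - δ)² ≥ ā (J - δN) - 2δāN + δ²`
    nlinarith [pow_le_pow_left₀ (sub_nonneg.mpr hδz) hlocal 2,
      mul_le_mul_of_nonneg_left hglobal habar.le,
      mul_le_mul_of_nonneg_left (mul_le_mul_of_nonneg_left hz habar.le) hδ]

/-- Uniform-in-time positive lower bounds on the global and
local order parameters for the inertial Kuramoto model on a nearly all-to-all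
symmetric network, under the initial energy condition `J > 3δN + δ²/ā`:
`R_p(t)² ≥ (J − δN)/(ā·N²)` and `R_{p,i}(t)² ≥ ā·(J − 3δN) − δ² > 0`. -/
theorem kuramoto_heterogeneous_order_parameter_lower_bound
    (N : ℕ) (hN : 1 ≤ N)
    (m γ : Fin N → ℝ) (hm : ∀ i, 0 < m i) (hγ : ∀ i, 0 < γ i)
    (a : Fin N → Fin N → ℝ)
    (hsym : ∀ i j, a i j = a j i) (hnn : ∀ i j, 0 ≤ a i j)
    (θ : ℝ → Fin N → ℝ)
    (hreg : ∀ i, ContDiff ℝ 2 (fun t => θ t i))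
    (hode : ∀ t ≥ (0:ℝ), ∀ i,
      m i * deriv (deriv (fun s => θ s i)) t
        = -γ i * deriv (fun s => θ s i) t
          + ∑ j, a i j * Real.sin (θ t j - θ t i))
    (abar δ : ℝ) (habar : 0 < abar) (hδ : 0 ≤ δ)
    (hnet : ∀ i, ∑ j, |a i j - abar| ≤ δ)
    (J : ℝ)
    (hJ : J = ∑ i, ∑ j, a i j * Real.cos (θ 0 i - θ 0 j)
      - ∑ i, m i * (deriv (fun s => θ s i) 0) ^ 2)
    (hinit : J > 3 * δ * N + δ ^ 2 / abar)
    (Rp : ℝ → ℝ)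
    (hRp : Rp = fun t =>
      ‖(N : ℂ)⁻¹ * ∑ j, Complex.exp (Complex.I * (θ t j : ℂ))‖)
    (Rpi : Fin N → ℝ → ℝ)
    (hRpi : Rpi = fun i t =>
      ‖∑ j, (a i j : ℂ) * Complex.exp (Complex.I * (θ t j : ℂ))‖) :
    ∀ t ≥ (0:ℝ), ∀ i,
      (J - δ * N) / (abar * N ^ 2) ≤ (Rp t) ^ 2 ∧
      abar * (J - 3 * δ * N) - δ ^ 2 ≤ (Rpi i t) ^ 2 ∧
      0 < abar * (J - 3 * δ * N) - δ ^ 2 :=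
  kuramoto_heterogeneous_order_parameter_lower_bound_general N m γ hm hγ a hsym θ hreg hode abar δ
    habar hnet J hJ hinit Rp hRp Rpi hRpi
end

section
/- Let Θ, Θ̃ : [0,∞) → ℝ^N be two solutions of the inertial Kuramoto model for N identical oscillators with all-to-all coupling (parameters m, γ, κ > 0), with Σ_i θ_i(0) = Σ_i θ̃_i(0) = 0 and Σ_i ω_i(0) = Σ_i ω̃_i(0) = 0. Suppose γ > 1/2 and that there exists S ∈ (0, π) with D(Θ(t)) + D(Θ̃(t)) ≤ S for all t ≥ 0; set Γ̃ := sin(S)/S. Let X(t) := Θ(t) − Θ̃(t), V(t) := Ω(t) − Ω̃(t), and for ε > 0 define the Lyapunov functional E_ε(t) := ε·γ·‖X(t)‖² + 2mε·⟨X(t), V(t)⟩ + m·‖V(t)‖². Then for every ε with κ/(2Γ̃) ≤ ε ≤ (2γ − 1)/(2m), and for all t > 0, d/dt E_ε(t) + min{ 2γ − 1 − 2mε, κ·(2Γ̃·ε − κ) }·(‖X(t)‖² + ‖V(t)‖²) ≤ 0. -/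
/-!
For the differences `X = Θ - Θ̃`, `V = Ω - Ω̃` one finds
`d/dt E_ε = 2(mε - γ)‖V‖² + 2ε⟨X, F⟩ + 2⟨V, F⟩`, where `F_i = (κ/N) ∑_j s_ij` with the
antisymmetric coupling `s_ij = sin(θ_j - θ_i) - sin(θ̃_j - θ̃_i)`. Symmetrising,
`⟨Y, F⟩ = -(κ/2N) ∑_{i,j} (Y_j - Y_i) s_ij`. When both phase diameters fit into `S < π`, concavity
of `sin` on `[0, π]` gives `(X_j - X_i) s_ij ≥ (sin S / S) (X_j - X_i)²`, hence
`⟨X, F⟩ ≤ -κ Γ̃ ‖X‖²`, since `∑ X_i = 0`: the coupling conserves total momentum, which friction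
keeps at its initial value `0`. As `sin` is 1-Lipschitz, AM-GM gives `2⟨V, F⟩ ≤ ‖V‖² + κ²‖X‖²`.
-/

/-- The phase diameter of a configuration `Θ : Fin N → ℝ`:
`D(Θ) = max_{i,j} (Θ_i − Θ_j)`. -/
noncomputable def phaseDiam {N : ℕ} (Θ : Fin N → ℝ) : ℝ :=
  ⨆ p : Fin N × Fin N, (Θ p.1 - Θ p.2)

open Real Finset

lemma Real.sin_div_mul_le_sin {S w : ℝ} (hS : 0 < S) (hSπ : S ≤ π) (hw : 0 ≤ w) (hwS : w ≤ S) :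
    sin S / S * w ≤ sin w := by
  have hchord := strictConcaveOn_sin_Icc.concaveOn.2 (Set.left_mem_Icc.2 pi_pos.le)
    (⟨hS.le, hSπ⟩ : S ∈ Set.Icc 0 π) (sub_nonneg.2 (div_le_one_of_le₀ hwS hS.le))
    (div_nonneg hw hS.le) (sub_add_cancel 1 (w / S))
  simp only [smul_eq_mul, mul_zero, zero_add, sin_zero, div_mul_cancel₀ w hS.ne'] at hchord
  rwa [div_mul_comm] at hchord

lemma Real.sin_div_mul_sq_le_mul_sin {S w : ℝ} (hS : 0 < S) (hSπ : S ≤ π) (hw : |w| ≤ S) :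
    sin S / S * w ^ 2 ≤ w * sin w := by
  wlog hw₀ : 0 ≤ w generalizing w
  · simpa using this (w := -w) (by rwa [abs_neg]) (by linarith)
  rw [abs_of_nonneg hw₀] at hw
  nlinarith [sin_div_mul_le_sin hS hSπ hw₀ hw]

lemma Real.sin_div_mul_sq_le_sub_mul_sin_sub_sin {S a b : ℝ} (hS : 0 < S) (hSπ : S < π)
    (hab : |a| + |b| ≤ S) :
    sin S / S * (a - b) ^ 2 ≤ (a - b) * (sin a - sin b) := by
  have hu : |(a + b) / 2| ≤ S / 2 := by
    rw [abs_div, abs_two]; linarith [abs_add_le a b]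
  have hw : |(a - b) / 2| ≤ S / 2 := by
    rw [abs_div, abs_two]; linarith [abs_sub a b]
  have hcos : cos (S / 2) ≤ cos ((a + b) / 2) := by
    rw [← cos_abs ((a + b) / 2)]
    exact cos_le_cos_of_nonneg_of_le_pi (abs_nonneg _) (by linarith) hu
  have hcos₀ : 0 ≤ cos (S / 2) := cos_nonneg_of_mem_Icc ⟨by linarith, by linarith⟩
  have hsin := sin_div_mul_sq_le_mul_sin (by linarith : 0 < S / 2) (by linarith) hw
  have hwsin : 0 ≤ (a - b) / 2 * sin ((a - b) / 2) :=
    le_trans (mul_nonneg (div_nonneg (sin_nonneg_of_nonneg_of_le_pi (by linarith) (by linarith))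
      (by linarith)) (sq_nonneg _)) hsin
  have hsinS : sin S / S = cos (S / 2) * (sin (S / 2) / (S / 2)) := by
    rw [show S = 2 * (S / 2) by ring, sin_two_mul]; field_simp
  calc sin S / S * (a - b) ^ 2
        = 4 * (cos (S / 2) * (sin (S / 2) / (S / 2) * ((a - b) / 2) ^ 2)) := by rw [hsinS]; ring
    _ ≤ 4 * (cos (S / 2) * ((a - b) / 2 * sin ((a - b) / 2))) := by gcongr
    _ ≤ 4 * (cos ((a + b) / 2) * ((a - b) / 2 * sin ((a - b) / 2))) := by gcongr
    _ = (a - b) * (sin a - sin b) := by rw [sin_sub_sin]; ring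

section AntisymmetricCoupling

variable {ι : Type*} [Fintype ι]

lemma sum_sum_sub_sq (x : ι → ℝ) :
    ∑ i, ∑ j, (x j - x i) ^ 2 = 2 * Fintype.card ι * ∑ i, x i ^ 2 - 2 * (∑ i, x i) ^ 2 := by
  simp only [sub_sq, sum_add_distrib, sum_sub_distrib, sum_const, card_univ, nsmul_eq_mul,
    ← sum_mul, ← mul_sum]
  ring

lemma sum_sum_eq_zero_of_antisymm {s : ι → ι → ℝ} (hs : ∀ i j, s j i = -s i j) :
    ∑ i, ∑ j, s i j = 0 := by
  have h : ∑ i, ∑ j, s i j = -∑ i, ∑ j, s i j := calc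
    _ = ∑ i, ∑ j, s j i := sum_comm
    _ = -∑ i, ∑ j, s i j := by
      simp only [← sum_neg_distrib]
      exact sum_congr rfl fun i _ => sum_congr rfl fun j _ => hs i j
  linarith

lemma sum_mul_sum_of_antisymm (y : ι → ℝ) {s : ι → ι → ℝ} (hs : ∀ i j, s j i = -s i j) :
    ∑ i, y i * ∑ j, s i j = -(1 / 2) * ∑ i, ∑ j, (y j - y i) * s i j := by
  have h : ∑ i, ∑ j, y j * s i j = -∑ i, ∑ j, y i * s i j := by
    rw [sum_comm]
    simp only [← sum_neg_distrib, ← mul_neg]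
    exact sum_congr rfl fun i _ => sum_congr rfl fun j _ => by rw [hs i j]
  simp only [mul_sum, sub_mul, sum_sub_distrib, h]
  ring

lemma sum_mul_sum_le_of_le_sub_mul {c : ℝ} (x : ι → ℝ) {s : ι → ι → ℝ}
    (hs : ∀ i j, s j i = -s i j) (hxs : ∀ i j, c * (x j - x i) ^ 2 ≤ (x j - x i) * s i j) :
    ∑ i, x i * ∑ j, s i j ≤ -c * (Fintype.card ι * ∑ i, x i ^ 2 - (∑ i, x i) ^ 2) := by
  have h := sum_le_sum fun i (_ : i ∈ univ) => sum_le_sum fun j (_ : j ∈ univ) => hxs i j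
  simp only [← mul_sum, sum_sum_sub_sq] at h
  rw [sum_mul_sum_of_antisymm x hs]
  linarith

lemma two_mul_sum_mul_sum_le_of_abs_le (κ : ℝ) (x v : ι → ℝ) {s : ι → ι → ℝ}
    (hs : ∀ i j, s j i = -s i j) (hxs : ∀ i j, |s i j| ≤ |x j - x i|) :
    2 * κ * ∑ i, v i * ∑ j, s i j ≤ Fintype.card ι * (∑ i, v i ^ 2 + κ ^ 2 * ∑ i, x i ^ 2) := by
  have hamgm (i j : ι) :
      -(κ * ((v j - v i) * s i j)) ≤ ((v j - v i) ^ 2 + κ ^ 2 * (x j - x i) ^ 2) / 2 := by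
    have h1 : |κ * ((v j - v i) * s i j)| ≤ |κ| * |v j - v i| * |x j - x i| := by
      rw [abs_mul, abs_mul, ← mul_assoc]
      exact mul_le_mul_of_nonneg_left (hxs i j) (by positivity)
    nlinarith [neg_le_abs (κ * ((v j - v i) * s i j)),
      sq_nonneg (|v j - v i| - |κ| * |x j - x i|), sq_abs (v j - v i), sq_abs (x j - x i), sq_abs κ]
  have h := sum_le_sum fun i (_ : i ∈ univ) => sum_le_sum fun j (_ : j ∈ univ) => hamgm i j
  simp only [← sum_div, sum_add_distrib, ← mul_sum, sum_neg_distrib, sum_sum_sub_sq] at h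
  rw [sum_mul_sum_of_antisymm v hs]
  nlinarith [sq_nonneg (∑ i, v i), sq_nonneg (∑ i, x i), sq_nonneg κ]

end AntisymmetricCoupling

lemma eq_zero_of_hasDerivAt_eq_mul_self {u : ℝ → ℝ} {c : ℝ}
    (hu : ∀ t ≥ 0, HasDerivAt u (c * u t) t) (h₀ : u 0 = 0) {t : ℝ} (ht : 0 ≤ t) : u t = 0 := by
  have hcont : ContinuousOn u (Set.Icc 0 t) := fun s hs =>
    (hu s hs.1).continuousAt.continuousWithinAt
  have h := ODE_solution_unique (v := fun _ x => c • x) (g := fun _ => 0)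
    (fun _ => lipschitzWith_smul c) hcont (fun s hs => (hu s hs.1).hasDerivWithinAt)
    continuousOn_const
    (fun s _ => by simpa using (hasDerivWithinAt_const s _ (0 : ℝ))) h₀
  exact h ⟨ht, le_rfl⟩

lemma hasDerivAt_lyapunov {ι : Type*} [Fintype ι] {x v : ℝ → ι → ℝ} {a : ι → ℝ} {t : ℝ}
    (hx : ∀ i, HasDerivAt (fun s => x s i) (v t i) t)
    (hv : ∀ i, HasDerivAt (fun s => v s i) (a i) t) (p q r : ℝ) :
    HasDerivAt (fun s => p * ∑ i, x s i ^ 2 + q * ∑ i, x s i * v s i + r * ∑ i, v s i ^ 2)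
      (2 * p * ∑ i, x t i * v t i + q * (∑ i, v t i ^ 2 + ∑ i, x t i * a i)
        + 2 * r * ∑ i, v t i * a i) t := by
  have hxx := HasDerivAt.fun_sum (u := univ) fun i _ => (hx i).fun_pow 2
  have hxv := HasDerivAt.fun_sum (u := univ) fun i _ => (hx i).mul (hv i)
  have hvv := HasDerivAt.fun_sum (u := univ) fun i _ => (hv i).fun_pow 2
  refine (((hxx.const_mul p).add (hxv.const_mul q)).add (hvv.const_mul r)).congr_deriv ?_
  simp only [mul_sum, ← sum_add_distrib]
  exact sum_congr rfl fun i _ => by ring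

structure IsInertialKuramotoSolution_s17 (N : ℕ) (m γ κ : ℝ) (θ : ℝ → Fin N → ℝ) : Prop where
  contDiff : ∀ i, ContDiff ℝ 2 (fun t => θ t i)
  ode : ∀ t ≥ (0 : ℝ), ∀ i, m * deriv (deriv (fun s => θ s i)) t
    = -γ * deriv (fun s => θ s i) t + (κ / N) * ∑ j, sin (θ t j - θ t i)

namespace IsInertialKuramotoSolution_s17

variable {N : ℕ} {m γ κ : ℝ} {θ θ' : ℝ → Fin N → ℝ}

lemma hasDerivAt (hθ : IsInertialKuramotoSolution_s17 N m γ κ θ) (i : Fin N) (t : ℝ) :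
    HasDerivAt (fun s => θ s i) (deriv (fun s => θ s i) t) t :=
  ((hθ.contDiff i).differentiable two_ne_zero t).hasDerivAt

lemma hasDerivAt_deriv (hθ : IsInertialKuramotoSolution_s17 N m γ κ θ) (i : Fin N) (t : ℝ) :
    HasDerivAt (deriv fun s => θ s i) (deriv (deriv fun s => θ s i) t) t :=
  ((hθ.contDiff i).differentiable_deriv_two t).hasDerivAt

lemma sum_ode (hθ : IsInertialKuramotoSolution_s17 N m γ κ θ) {t : ℝ} (ht : 0 ≤ t) :
    m * ∑ i, deriv (deriv fun s => θ s i) t = -γ * ∑ i, deriv (fun s => θ s i) t := by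
  have hcoupling : ∑ i, ∑ j, sin (θ t j - θ t i) = 0 :=
    sum_sum_eq_zero_of_antisymm fun i j => by rw [← neg_sub, sin_neg]
  rw [mul_sum, sum_congr rfl fun i _ => hθ.ode t ht i, sum_add_distrib, ← mul_sum, ← mul_sum,
    hcoupling, mul_zero, add_zero]

lemma sum_eq_zero (hθ : IsInertialKuramotoSolution_s17 N m γ κ θ) (hm : m ≠ 0)
    (hθ₀ : ∑ i, θ 0 i = 0) (hω₀ : ∑ i, deriv (fun s => θ s i) 0 = 0) {t : ℝ} (ht : 0 ≤ t) :
    ∑ i, θ t i = 0 := by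
  have hω : ∀ t ≥ 0, ∑ i, deriv (fun s => θ s i) t = 0 := fun t ht => by
    refine eq_zero_of_hasDerivAt_eq_mul_self (u := fun t => ∑ i, deriv (fun s => θ s i) t)
      (c := -γ / m) (fun s hs => ?_) hω₀ ht
    refine (HasDerivAt.fun_sum (u := univ) fun i _ => hθ.hasDerivAt_deriv i s).congr_deriv ?_
    field_simp
    linarith [hθ.sum_ode hs]
  refine eq_zero_of_hasDerivAt_eq_mul_self (u := fun t => ∑ i, θ t i) (c := 0)
    (fun s hs => ?_) hθ₀ ht
  refine (HasDerivAt.fun_sum (u := univ) fun i _ => hθ.hasDerivAt i s).congr_deriv ?_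
  rw [hω s hs, zero_mul]

lemma sub_ode (hθ : IsInertialKuramotoSolution_s17 N m γ κ θ)
    (hθ' : IsInertialKuramotoSolution_s17 N m γ κ θ') {t : ℝ} (ht : 0 ≤ t) (i : Fin N) :
    m * (deriv (deriv fun s => θ s i) t - deriv (deriv fun s => θ' s i) t)
      = -γ * (deriv (fun s => θ s i) t - deriv (fun s => θ' s i) t)
        + κ / N * ∑ j, (sin (θ t j - θ t i) - sin (θ' t j - θ' t i)) := by
  rw [sum_sub_distrib]
  linear_combination hθ.ode t ht i - hθ'.ode t ht i

end IsInertialKuramotoSolution_s17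

lemma abs_sub_le_phaseDiam {N : ℕ} (Θ : Fin N → ℝ) (i j : Fin N) :
    |Θ i - Θ j| ≤ phaseDiam Θ := by
  have hbdd : BddAbove (Set.range fun p : Fin N × Fin N => Θ p.1 - Θ p.2) :=
    (Set.finite_range _).bddAbove
  exact abs_sub_le_iff.2 ⟨le_ciSup hbdd (i, j), le_ciSup hbdd (j, i)⟩

lemma sin_div_mul_sq_le_of_phaseDiam_add_le {N : ℕ} {S : ℝ} (hS : 0 < S) (hSπ : S < π)
    {Θ Θ' : Fin N → ℝ} (hD : phaseDiam Θ + phaseDiam Θ' ≤ S) (i j : Fin N) :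
    sin S / S * ((Θ j - Θ' j) - (Θ i - Θ' i)) ^ 2
      ≤ ((Θ j - Θ' j) - (Θ i - Θ' i)) * (sin (Θ j - Θ i) - sin (Θ' j - Θ' i)) := by
  have h := sin_div_mul_sq_le_sub_mul_sin_sub_sin hS hSπ
    ((add_le_add (abs_sub_le_phaseDiam Θ j i) (abs_sub_le_phaseDiam Θ' j i)).trans hD)
  rwa [show (Θ j - Θ i) - (Θ' j - Θ' i) = (Θ j - Θ' j) - (Θ i - Θ' i) by ring] at h

lemma lyapunov_deriv_add_min_mul_le {N : ℕ} (hN : 0 < N) {m γ κ ε Γ : ℝ} (hκ : 0 ≤ κ)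
    (hε : 0 ≤ ε) {x v a : Fin N → ℝ} {s : Fin N → Fin N → ℝ} (hx : ∑ i, x i = 0)
    (hs : ∀ i j, s j i = -s i j) (hxs : ∀ i j, Γ * (x j - x i) ^ 2 ≤ (x j - x i) * s i j)
    (hsx : ∀ i j, |s i j| ≤ |x j - x i|) (ha : ∀ i, m * a i = -γ * v i + κ / N * ∑ j, s i j) :
    2 * (ε * γ) * ∑ i, x i * v i + 2 * m * ε * (∑ i, v i ^ 2 + ∑ i, x i * a i)
      + 2 * m * ∑ i, v i * a i
      + min (2 * γ - 1 - 2 * m * ε) (κ * (2 * Γ * ε - κ)) * (∑ i, x i ^ 2 + ∑ i, v i ^ 2)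
      ≤ 0 := by
  have hxa : m * ∑ i, x i * a i = -γ * ∑ i, x i * v i + κ / N * ∑ i, x i * ∑ j, s i j := by
    have h (i : Fin N) : m * (x i * a i) = -γ * (x i * v i) + κ / N * (x i * ∑ j, s i j) := by
      linear_combination x i * ha i
    rw [mul_sum, sum_congr rfl fun i _ => h i, sum_add_distrib, ← mul_sum, ← mul_sum]
  have hva : m * ∑ i, v i * a i = -γ * ∑ i, v i ^ 2 + κ / N * ∑ i, v i * ∑ j, s i j := by
    have h (i : Fin N) : m * (v i * a i) = -γ * (v i ^ 2) + κ / N * (v i * ∑ j, s i j) := by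
      linear_combination v i * ha i
    rw [mul_sum, sum_congr rfl fun i _ => h i, sum_add_distrib, ← mul_sum, ← mul_sum]
  have hxs' := sum_mul_sum_le_of_le_sub_mul x hs hxs
  have hsx' := two_mul_sum_mul_sum_le_of_abs_le κ x v hs hsx
  simp only [Fintype.card_fin, hx] at hxs' hsx'
  have hN' : (0 : ℝ) < N := Nat.cast_pos.2 hN
  have hcoupx : κ / N * ∑ i, x i * ∑ j, s i j ≤ -(κ * Γ) * ∑ i, x i ^ 2 := by
    calc κ / N * ∑ i, x i * ∑ j, s i j ≤ κ / N * (-Γ * (N * ∑ i, x i ^ 2 - 0 ^ 2)) := by gcongr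
      _ = -(κ * Γ) * ∑ i, x i ^ 2 := by field_simp; ring
  have hcoupv : 2 * (κ / N * ∑ i, v i * ∑ j, s i j) ≤ ∑ i, v i ^ 2 + κ ^ 2 * ∑ i, x i ^ 2 := by
    calc 2 * (κ / N * ∑ i, v i * ∑ j, s i j) = (2 * κ * ∑ i, v i * ∑ j, s i j) / N := by ring
      _ ≤ _ := by rw [div_le_iff₀ hN']; linarith
  have hX := sum_nonneg fun i (_ : i ∈ univ) => sq_nonneg (x i)
  have hV := sum_nonneg fun i (_ : i ∈ univ) => sq_nonneg (v i)
  nlinarith [min_le_left (2 * γ - 1 - 2 * m * ε) (κ * (2 * Γ * ε - κ)),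
    min_le_right (2 * γ - 1 - 2 * m * ε) (κ * (2 * Γ * ε - κ))]

theorem kuramoto_inertia_lyapunov_dissipation_general
    (N : ℕ) (hN : 1 ≤ N)
    (m γ κ : ℝ) (hm : 0 < m) (hκ : 0 < κ)
    (θ θt : ℝ → Fin N → ℝ)
    (hreg : ∀ i, ContDiff ℝ 2 (fun t => θ t i))
    (hregt : ∀ i, ContDiff ℝ 2 (fun t => θt t i))
    (hode : ∀ t ≥ (0:ℝ), ∀ i,
      m * deriv (deriv (fun s => θ s i)) t
        = -γ * deriv (fun s => θ s i) t
          + (κ / N) * ∑ j, Real.sin (θ t j - θ t i))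
    (hodet : ∀ t ≥ (0:ℝ), ∀ i,
      m * deriv (deriv (fun s => θt s i)) t
        = -γ * deriv (fun s => θt s i) t
          + (κ / N) * ∑ j, Real.sin (θt t j - θt t i))
    (hθ0 : ∑ i, θ 0 i = 0) (hθt0 : ∑ i, θt 0 i = 0)
    (hω0 : ∑ i, deriv (fun s => θ s i) 0 = 0)
    (hωt0 : ∑ i, deriv (fun s => θt s i) 0 = 0)
    (S : ℝ) (hS0 : 0 < S) (hSπ : S < Real.pi)
    (hD : ∀ t ≥ (0:ℝ), phaseDiam (θ t) + phaseDiam (θt t) ≤ S)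
    (Γt : ℝ) (hΓt : Γt = Real.sin S / S)
    (X V : ℝ → Fin N → ℝ)
    (hX : X = fun t i => θ t i - θt t i)
    (hV : V = fun t i =>
      deriv (fun s => θ s i) t - deriv (fun s => θt s i) t)
    (Eε : ℝ → ℝ → ℝ)
    (hEε : Eε = fun ε t =>
      ε * γ * (∑ i, (X t i) ^ 2) + 2 * m * ε * (∑ i, X t i * V t i)
        + m * (∑ i, (V t i) ^ 2)) :
    ∀ ε : ℝ, κ / (2 * Γt) ≤ ε → ε ≤ (2 * γ - 1) / (2 * m) →
      ∀ t > (0:ℝ),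
        deriv (fun s => Eε ε s) t
          + min (2 * γ - 1 - 2 * m * ε) (κ * (2 * Γt * ε - κ))
            * ((∑ i, (X t i) ^ 2) + (∑ i, (V t i) ^ 2)) ≤ 0 := by
  intro ε hε _ t ht
  have hθ : IsInertialKuramotoSolution_s17 N m γ κ θ := ⟨hreg, hode⟩
  have hθt : IsInertialKuramotoSolution_s17 N m γ κ θt := ⟨hregt, hodet⟩
  have hΓ : 0 < Γt := hΓt ▸ div_pos (sin_pos_of_pos_of_lt_pi hS0 hSπ) hS0
  have hdX (i : Fin N) : HasDerivAt (fun s => X s i) (V t i) t := by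
    subst hX hV; exact (hθ.hasDerivAt i t).sub (hθt.hasDerivAt i t)
  have hdV (i : Fin N) : HasDerivAt (fun s => V s i)
      (deriv (deriv fun s => θ s i) t - deriv (deriv fun s => θt s i) t) t := by
    subst hV; exact (hθ.hasDerivAt_deriv i t).sub (hθt.hasDerivAt_deriv i t)
  rw [hEε, (hasDerivAt_lyapunov hdX hdV _ _ _).deriv]
  subst hX hV hΓt
  refine lyapunov_deriv_add_min_mul_le hN hκ.le ((div_pos hκ (mul_pos two_pos hΓ)).le.trans hε)
    ?_ (fun i j => by rw [← neg_sub (θ t j), ← neg_sub (θt t j), sin_neg, sin_neg]; ring)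
    (sin_div_mul_sq_le_of_phaseDiam_add_le hS0 hSπ (hD t ht.le))
    (fun i j => ?_) (hθ.sub_ode hθt ht.le)
  · rw [sum_sub_distrib, hθ.sum_eq_zero hm.ne' hθ0 hω0 ht.le,
      hθt.sum_eq_zero hm.ne' hθt0 hωt0 ht.le, sub_zero]
  · rw [show θ t j - θt t j - (θ t i - θt t i) = (θ t j - θ t i) - (θt t j - θt t i) by ring]
    exact abs_sin_sub_sin_le _ _

/-- Lyapunov dissipation estimate for the difference of two
solutions of the inertial Kuramoto model for identical oscillators with
all-to-all coupling: with `X = Θ − Θ̃`, `V = Ω − Ω̃` and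
`E_ε = εγ‖X‖² + 2mε⟨X,V⟩ + m‖V‖²`, for every
`ε ∈ [κ/(2Γ̃), (2γ−1)/(2m)]` and all `t > 0`,
`d/dt E_ε(t) + min{2γ−1−2mε, κ(2Γ̃ε−κ)}·(‖X(t)‖² + ‖V(t)‖²) ≤ 0`. -/
theorem kuramoto_inertia_lyapunov_dissipation
    (N : ℕ) (hN : 1 ≤ N)
    (m γ κ : ℝ) (hm : 0 < m) (hγpos : 0 < γ) (hκ : 0 < κ)
    (θ θt : ℝ → Fin N → ℝ)
    (hreg : ∀ i, ContDiff ℝ 2 (fun t => θ t i))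
    (hregt : ∀ i, ContDiff ℝ 2 (fun t => θt t i))
    (hode : ∀ t ≥ (0:ℝ), ∀ i,
      m * deriv (deriv (fun s => θ s i)) t
        = -γ * deriv (fun s => θ s i) t
          + (κ / N) * ∑ j, Real.sin (θ t j - θ t i))
    (hodet : ∀ t ≥ (0:ℝ), ∀ i,
      m * deriv (deriv (fun s => θt s i)) t
        = -γ * deriv (fun s => θt s i) t
          + (κ / N) * ∑ j, Real.sin (θt t j - θt t i))
    (hθ0 : ∑ i, θ 0 i = 0) (hθt0 : ∑ i, θt 0 i = 0)
    (hω0 : ∑ i, deriv (fun s => θ s i) 0 = 0)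
    (hωt0 : ∑ i, deriv (fun s => θt s i) 0 = 0)
    (hγ : 1 / 2 < γ)
    (S : ℝ) (hS0 : 0 < S) (hSπ : S < Real.pi)
    (hD : ∀ t ≥ (0:ℝ), phaseDiam (θ t) + phaseDiam (θt t) ≤ S)
    (Γt : ℝ) (hΓt : Γt = Real.sin S / S)
    (X V : ℝ → Fin N → ℝ)
    (hX : X = fun t i => θ t i - θt t i)
    (hV : V = fun t i =>
      deriv (fun s => θ s i) t - deriv (fun s => θt s i) t)
    (Eε : ℝ → ℝ → ℝ)
    (hEε : Eε = fun ε t =>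
      ε * γ * (∑ i, (X t i) ^ 2) + 2 * m * ε * (∑ i, X t i * V t i)
        + m * (∑ i, (V t i) ^ 2)) :
    ∀ ε : ℝ, κ / (2 * Γt) ≤ ε → ε ≤ (2 * γ - 1) / (2 * m) →
      ∀ t > (0:ℝ),
        deriv (fun s => Eε ε s) t
          + min (2 * γ - 1 - 2 * m * ε) (κ * (2 * Γt * ε - κ))
            * ((∑ i, (X t i) ^ 2) + (∑ i, (V t i) ^ 2)) ≤ 0 :=
  kuramoto_inertia_lyapunov_dissipation_general N hN m γ κ hm hκ θ θt hreg hregt hode hodet hθ0 hθt0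
    hω0 hωt0 S hS0 hSπ hD Γt hΓt X V hX hV Eε hEε
end
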